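/- arXiv:2309.03975 — 5 statements merged into one kernel-verified Lean document; each statement's English description precedes it below -/
import Mathlib

section
/- Let f : [-1,1] → ℝ be (d+1)-times continuously differentiable with max_{x ∈ [-1,1]} |f(x)| = 1. If f vanishes at at least d+1 distinct points of [-1,1], then max_{x ∈ [-1,1]} |f^{(d+1)}(x)| ≥ (d+1)!/2^{d+1}. -/
/-!
Let `S` be `d + 1` zeros of `f` and `x₀` a point with `|f x₀| = 1`. Subtracting from `f` the
multiple of `w(y) = ∏_{z ∈ S} (y - z)` that also vanishes at `x₀` leaves a function with `d + 2`
zeros, so by repeated Rolle its `(d+1)`-st derivative vanishes at some `ξ`. Since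
`w^{(d+1)} = (d+1)!`, this is the interpolation error formula
`f x₀ · (d+1)! = f^{(d+1)}(ξ) · w(x₀)`, and `|w(x₀)| ≤ 2^{d+1}` on `[-1, 1]`.
-/

open Set Polynomial

section PolynomialDeriv

variable {𝕜 : Type*} [NontriviallyNormedField 𝕜]

theorem Polynomial.iterate_deriv_eval (p : 𝕜[X]) (n : ℕ) :
    deriv^[n] (fun x => p.eval x) = fun x => (derivative^[n] p).eval x := by
  induction n generalizing p with
  | zero => rfl
  | succ n ih =>
    have hderiv : deriv (fun x => p.eval x) = fun x => p.derivative.eval x := by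
      ext x
      exact p.deriv
    rw [Function.iterate_succ_apply, hderiv, ih, ← Function.iterate_succ_apply]

theorem Polynomial.iteratedDerivWithin_eval (p : 𝕜[X]) (n : ℕ) {s : Set 𝕜}
    (hs : UniqueDiffOn 𝕜 s) {x : 𝕜} (hx : x ∈ s) :
    iteratedDerivWithin n (fun y => p.eval y) s x = (derivative^[n] p).eval x := by
  have hp : ContDiff 𝕜 n fun y => p.eval y := p.contDiff_aeval n
  rw [iteratedDerivWithin_eq_iteratedDeriv hs hp.contDiffAt hx, iteratedDeriv_eq_iterate,
    iterate_deriv_eval]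

theorem iteratedDerivWithin_card_prod_sub (S : Finset 𝕜) {s : Set 𝕜} (hs : UniqueDiffOn 𝕜 s)
    {x : 𝕜} (hx : x ∈ s) :
    iteratedDerivWithin S.card (fun y => ∏ z ∈ S, (y - z)) s x = S.card.factorial := by
  have hw : (fun y => ∏ z ∈ S, (y - z)) = fun y => (∏ z ∈ S, (X - C z)).eval y := by
    simp [eval_prod]
  rw [hw, iteratedDerivWithin_eval _ _ hs hx, iterate_derivative_prod_X_sub_C le_rfl]
  simp

end PolynomialDeriv

theorem abs_prod_sub_le_pow {a b x : ℝ} (hx : x ∈ Icc a b) {S : Finset ℝ}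
    (hS : (S : Set ℝ) ⊆ Icc a b) : |∏ z ∈ S, (x - z)| ≤ (b - a) ^ S.card := by
  rw [Finset.abs_prod, ← Finset.prod_const]
  refine Finset.prod_le_prod (fun _ _ => abs_nonneg _) fun z hz => ?_
  have hz := hS hz
  rw [abs_sub_le_iff]
  constructor <;> linarith [hx.1, hx.2, hz.1, hz.2]

section Rolle

variable {a b : ℝ} {g : ℝ → ℝ}

theorem exists_strictMono_derivWithin_eq_zero {n : ℕ} (hg : DifferentiableOn ℝ g (Icc a b))
    {x : Fin (n + 2) → ℝ} (hx : StrictMono x) (hxI : ∀ i, x i ∈ Icc a b)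
    (hx0 : ∀ i, g (x i) = 0) :
    ∃ c : Fin (n + 1) → ℝ, StrictMono c ∧ (∀ i, c i ∈ Icc a b) ∧
      ∀ i, derivWithin g (Icc a b) (c i) = 0 := by
  have hrolle : ∀ i : Fin (n + 1), ∃ c ∈ Ioo (x i.castSucc) (x i.succ), deriv g c = 0 := by
    intro i
    have hsub : Icc (x i.castSucc) (x i.succ) ⊆ Icc a b :=
      Icc_subset_Icc (hxI _).1 (hxI _).2
    exact exists_deriv_eq_zero (hx Fin.castSucc_lt_succ) (hg.continuousOn.mono hsub)
      ((hx0 _).trans (hx0 _).symm)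
  choose c hcx hc0 using hrolle
  have hcab : ∀ i, c i ∈ Ioo a b := fun i =>
    ⟨(hxI _).1.trans_lt (hcx i).1, (hcx i).2.trans_le (hxI _).2⟩
  refine ⟨c, fun i j hij => ?_, fun i => Ioo_subset_Icc_self (hcab i), fun i => ?_⟩
  · have hxij : x i.succ ≤ x j.castSucc := hx.monotone (Fin.succ_le_castSucc_iff.2 hij)
    exact (hcx i).2.trans (hxij.trans_lt (hcx j).1)
  · rw [derivWithin_of_mem_nhds (Icc_mem_nhds (hcab i).1 (hcab i).2), hc0]

theorem exists_iteratedDerivWithin_eq_zero_of_strictMono (hab : a < b) {n : ℕ}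
    (hg : ContDiffOn ℝ n g (Icc a b)) {x : Fin (n + 1) → ℝ} (hx : StrictMono x)
    (hxI : ∀ i, x i ∈ Icc a b) (hx0 : ∀ i, g (x i) = 0) :
    ∃ ξ ∈ Icc a b, iteratedDerivWithin n g (Icc a b) ξ = 0 := by
  induction n generalizing g with
  | zero => exact ⟨x 0, hxI 0, by simpa using hx0 0⟩
  | succ n ih =>
    obtain ⟨c, hc, hcI, hc0⟩ :=
      exists_strictMono_derivWithin_eq_zero (hg.differentiableOn (by simp)) hx hxI hx0
    have hg' : ContDiffOn ℝ n (derivWithin g (Icc a b)) (Icc a b) :=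
      hg.derivWithin (uniqueDiffOn_Icc hab) (by norm_cast)
    simpa only [iteratedDerivWithin_succ'] using ih hg' hc hcI hc0

theorem exists_iteratedDerivWithin_eq_zero_of_card_eq (hab : a < b) {n : ℕ}
    (hg : ContDiffOn ℝ n g (Icc a b)) {T : Finset ℝ} (hT : T.card = n + 1)
    (hTI : (T : Set ℝ) ⊆ Icc a b) (hT0 : ∀ x ∈ T, g x = 0) :
    ∃ ξ ∈ Icc a b, iteratedDerivWithin n g (Icc a b) ξ = 0 :=
  exists_iteratedDerivWithin_eq_zero_of_strictMono hab hg (T.orderEmbOfFin hT).strictMono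
    (fun i => hTI (T.orderEmbOfFin_mem hT i)) fun i => hT0 _ (T.orderEmbOfFin_mem hT i)

end Rolle

theorem exists_mul_factorial_eq_iteratedDerivWithin_mul_prod {a b : ℝ} (hab : a < b) {n : ℕ}
    {f : ℝ → ℝ} (hf : ContDiffOn ℝ (n + 1) f (Icc a b)) {S : Finset ℝ} (hS : S.card = n + 1)
    (hSI : (S : Set ℝ) ⊆ Icc a b) (hS0 : ∀ z ∈ S, f z = 0) {x₀ : ℝ} (hx₀ : x₀ ∈ Icc a b) :
    ∃ ξ ∈ Icc a b, f x₀ * (n + 1).factorial =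
      iteratedDerivWithin (n + 1) f (Icc a b) ξ * ∏ z ∈ S, (x₀ - z) := by
  by_cases hx₀S : x₀ ∈ S
  · exact ⟨x₀, hx₀, by simp [hS0 x₀ hx₀S, Finset.prod_eq_zero hx₀S (sub_self x₀)]⟩
  set w : ℝ → ℝ := fun y => ∏ z ∈ S, (y - z)
  have hw : w x₀ ≠ 0 :=
    Finset.prod_ne_zero_iff.2 fun z hz => sub_ne_zero.2 fun h => hx₀S (h ▸ hz)
  set lam := f x₀ / w x₀
  have hf' : ContDiffOn ℝ (n + 1 : ℕ) f (Icc a b) := by exact_mod_cast hf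
  have hw_smooth : ContDiffOn ℝ (n + 1 : ℕ) (fun y => lam * w y) (Icc a b) := by fun_prop
  have hzero : ∀ y ∈ insert x₀ S, f y - lam * w y = 0 := by
    intro y hy
    rcases Finset.mem_insert.1 hy with rfl | hyS
    · simp [lam, div_mul_cancel₀ _ hw]
    · simp [hS0 y hyS, w, Finset.prod_eq_zero hyS (sub_self y)]
  obtain ⟨ξ, hξ, hξ0⟩ := exists_iteratedDerivWithin_eq_zero_of_card_eq hab (hf'.sub hw_smooth)
    (by rw [Finset.card_insert_of_notMem hx₀S, hS])
    (by simpa [insert_subset_iff] using ⟨hx₀, hSI⟩) hzero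
  have hU := uniqueDiffOn_Icc hab
  have hw_deriv : iteratedDerivWithin (n + 1) w (Icc a b) ξ = (n + 1).factorial := by
    simpa only [hS] using iteratedDerivWithin_card_prod_sub S hU hξ
  rw [show (fun y => f y - lam * w y) = f - fun y => lam * w y from rfl,
    iteratedDerivWithin_sub hξ hU (hf' ξ hξ) (hw_smooth ξ hξ), iteratedDerivWithin_const_mul_field,
    hw_deriv, sub_eq_zero] at hξ0
  refine ⟨ξ, hξ, ?_⟩
  rw [hξ0]
  linear_combination ((n + 1).factorial : ℝ) * hzero x₀ (Finset.mem_insert_self x₀ S)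

theorem higher_deriv_lower_bound_of_zeros_general
    (d : ℕ) (f : ℝ → ℝ)
    (hf : ContDiffOn ℝ (d + 1) f (Set.Icc (-1 : ℝ) 1))
    (hattain : ∃ x ∈ Set.Icc (-1 : ℝ) 1, |f x| = 1)
    (Z : Finset ℝ) (hZ : (Z : Set ℝ) ⊆ Set.Icc (-1 : ℝ) 1)
    (hZcard : d + 1 ≤ Z.card) (hZzero : ∀ x ∈ Z, f x = 0) :
    ∃ x ∈ Set.Icc (-1 : ℝ) 1,
      (Nat.factorial (d + 1) : ℝ) / 2 ^ (d + 1) ≤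
        |iteratedDerivWithin (d + 1) f (Set.Icc (-1 : ℝ) 1) x| := by
  obtain ⟨x₀, hx₀, hfx₀⟩ := hattain
  obtain ⟨S, hSZ, hS⟩ := Finset.exists_subset_card_eq hZcard
  have hSI : (S : Set ℝ) ⊆ Icc (-1) 1 := (Finset.coe_subset.2 hSZ).trans hZ
  obtain ⟨ξ, hξ, hinterp⟩ := exists_mul_factorial_eq_iteratedDerivWithin_mul_prod
    (by norm_num) hf hS hSI (fun z hz => hZzero z (hSZ hz)) hx₀
  have hprod : |∏ z ∈ S, (x₀ - z)| ≤ 2 ^ (d + 1) := by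
    simpa [hS, one_add_one_eq_two] using abs_prod_sub_le_pow hx₀ hSI
  refine ⟨ξ, hξ, (div_le_iff₀ (by positivity)).2 ?_⟩
  calc ((d + 1).factorial : ℝ) = |f x₀ * (d + 1).factorial| := by simp [abs_mul, hfx₀]
    _ = |iteratedDerivWithin (d + 1) f (Icc (-1) 1) ξ| * |∏ z ∈ S, (x₀ - z)| := by
      rw [hinterp, abs_mul]
    _ ≤ |iteratedDerivWithin (d + 1) f (Icc (-1) 1) ξ| * 2 ^ (d + 1) := by gcongr

/-- If `f : [-1,1] → ℝ` is `(d+1)`-times continuously differentiable, with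
`max_{[-1,1]} |f| = 1`, and `f` vanishes at at least `d+1` distinct points of `[-1,1]`,
then `max_{[-1,1]} |f^{(d+1)}| ≥ (d+1)!/2^(d+1)`. -/
theorem higher_deriv_lower_bound_of_zeros
    (d : ℕ) (f : ℝ → ℝ)
    (hf : ContDiffOn ℝ (d + 1) f (Set.Icc (-1 : ℝ) 1))
    (hbound : ∀ x ∈ Set.Icc (-1 : ℝ) 1, |f x| ≤ 1)
    (hattain : ∃ x ∈ Set.Icc (-1 : ℝ) 1, |f x| = 1)
    (Z : Finset ℝ) (hZ : (Z : Set ℝ) ⊆ Set.Icc (-1 : ℝ) 1)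
    (hZcard : d + 1 ≤ Z.card) (hZzero : ∀ x ∈ Z, f x = 0) :
    ∃ x ∈ Set.Icc (-1 : ℝ) 1,
      (Nat.factorial (d + 1) : ℝ) / 2 ^ (d + 1) ≤
        |iteratedDerivWithin (d + 1) f (Set.Icc (-1 : ℝ) 1) x| :=
  higher_deriv_lower_bound_of_zeros_general d f hf hattain Z hZ hZcard hZzero
end

section
/- Let f : B^n → ℝ be (d+1)-times continuously differentiable with max |f| = 1 on B^n, and suppose f vanishes on a set Z ⊂ B^n with non-empty interior. Then the sup norm of the (d+1)-st derivative of f on B^n is at least (d+1)!/2^{d+1}. -/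
/-!
Join a point `z` of the interior of `Z` to a point `x` where `|f x| = 1` and restrict `f` to
the segment: `g t = f (z + t • v)` with `v = x - z`. Since `g` vanishes near `t = 0`, its
Taylor polynomial of degree `d` at `0` is zero, so the Lagrange remainder gives
`1 = |g 1| = |g⁽ᵈ⁺¹⁾ ξ| / (d+1)!`. Now `g⁽ᵈ⁺¹⁾ ξ` is the `(d+1)`-st derivative of `f`
evaluated on the diagonal `(v, …, v)`; expanding `v` in coordinates, each at most `‖v‖ ≤ 2`
in absolute value, bounds it by `2^(d+1)` times the sum of the absolute values of the
partial derivatives.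
-/

open Metric

/-- The pointwise norm of the `k`-th derivative of `f` within the closed unit ball, taken
as the sum of absolute values of all order-`k` partial derivatives (indexed by functions
`c : Fin k → Fin n` choosing a coordinate direction for each differentiation). -/
noncomputable def partialsNorm (n k : ℕ) (f : EuclideanSpace ℝ (Fin n) → ℝ)
    (x : EuclideanSpace ℝ (Fin n)) : ℝ :=
  ∑ c : Fin k → Fin n,
    |iteratedFDerivWithin ℝ k f (closedBall (0 : EuclideanSpace ℝ (Fin n)) 1) x
      (fun i => EuclideanSpace.single (c i) 1)|

open Set Filter Topology
open scoped Nat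

theorem ContinuousMultilinearMap.norm_apply_const_le_sum_single {k n : ℕ} {F : Type*}
    [NormedAddCommGroup F] [NormedSpace ℝ F]
    (T : ContinuousMultilinearMap ℝ (fun _ : Fin k => EuclideanSpace ℝ (Fin n)) F)
    (v : EuclideanSpace ℝ (Fin n)) {C : ℝ} (hv : ‖v‖ ≤ C) :
    ‖T (fun _ => v)‖ ≤
      C ^ k * ∑ c : Fin k → Fin n, ‖T (fun i => EuclideanSpace.single (c i) 1)‖ := by
  have hexpand : T (fun _ => v) =
      ∑ c : Fin k → Fin n, (∏ i, v (c i)) • T (fun i => EuclideanSpace.single (c i) 1) := by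
    conv_lhs => rw [← (EuclideanSpace.basisFun (Fin n) ℝ).sum_repr v]
    simp only [EuclideanSpace.basisFun_repr, EuclideanSpace.basisFun_apply]
    rw [T.map_sum]
    exact Finset.sum_congr rfl fun c _ => T.map_smul_univ _ _
  rw [hexpand, Finset.mul_sum]
  refine (norm_sum_le _ _).trans (Finset.sum_le_sum fun c _ => ?_)
  rw [norm_smul, norm_prod]
  gcongr
  calc ∏ i, ‖v (c i)‖ ≤ ∏ _i : Fin k, C :=
        Finset.prod_le_prod (fun _ _ => norm_nonneg _) fun i _ =>
          (PiLp.norm_apply_le v _).trans hv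
    _ = C ^ k := by simp

section Line

variable {E F : Type*} [NormedAddCommGroup E] [NormedSpace ℝ E]
  [NormedAddCommGroup F] [NormedSpace ℝ F] {f : E → F} {s : Set E} {I : Set ℝ} {z v : E}
  {m k : ℕ}

theorem hasDerivWithinAt_iteratedFDerivWithin_line (hf : ContDiffOn ℝ m f s)
    (hs : UniqueDiffOn ℝ s) (hmaps : MapsTo (fun t : ℝ => z + t • v) I s) (hk : k < m)
    {t : ℝ} (ht : t ∈ I) :
    HasDerivWithinAt (fun t : ℝ => iteratedFDerivWithin ℝ k f s (z + t • v) (fun _ => v))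
      (iteratedFDerivWithin ℝ (k + 1) f s (z + t • v) (fun _ => v)) I t := by
  have hline : HasDerivWithinAt (fun t : ℝ => z + t • v) v I t := by
    simpa using ((hasDerivAt_id t).smul_const v).const_add z |>.hasDerivWithinAt
  have hD : HasFDerivWithinAt (iteratedFDerivWithin ℝ k f s)
      (fderivWithin ℝ (iteratedFDerivWithin ℝ k f s) s (z + t • v)) s (z + t • v) :=
    (hf.differentiableOn_iteratedFDerivWithin (mod_cast hk) hs _ (hmaps ht)).hasFDerivWithinAt
  rw [iteratedFDerivWithin_succ_apply_left]
  exact (ContinuousMultilinearMap.apply ℝ (fun _ : Fin k => E) F (fun _ => v)).hasFDerivAt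
    |>.comp_hasDerivWithinAt t (hD.comp_hasDerivWithinAt t hline hmaps)

theorem iteratedDerivWithin_comp_line (hf : ContDiffOn ℝ m f s) (hs : UniqueDiffOn ℝ s)
    (hI : UniqueDiffOn ℝ I) (hmaps : MapsTo (fun t : ℝ => z + t • v) I s) (hk : k ≤ m)
    {t : ℝ} (ht : t ∈ I) :
    iteratedDerivWithin k (fun t : ℝ => f (z + t • v)) I t =
      iteratedFDerivWithin ℝ k f s (z + t • v) (fun _ => v) := by
  induction k generalizing t with
  | zero => simp
  | succ k ih =>
    rw [iteratedDerivWithin_succ,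
      derivWithin_congr (fun t' ht' => ih (by omega) ht') (ih (by omega) ht)]
    exact (hasDerivWithinAt_iteratedFDerivWithin_line hf hs hmaps (by omega) ht).derivWithin
      (hI t ht)

end Line

theorem iteratedDerivWithin_eq_zero_of_eventuallyEq_zero {F : Type*} [NormedAddCommGroup F]
    [NormedSpace ℝ F] {g : ℝ → F} {s : Set ℝ} {a : ℝ} (h : g =ᶠ[𝓝 a] 0) (k : ℕ) :
    iteratedDerivWithin k g s a = 0 :=
  ((h.filter_mono nhdsWithin_le_nhds).iteratedDerivWithin_eq h.eq_of_nhds).trans (by simp)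

theorem taylor_mean_remainder_lagrange_of_flat {g : ℝ → ℝ} {a b : ℝ} {d : ℕ} (hab : a < b)
    (hg : ContDiffOn ℝ (d + 1) g (Icc a b))
    (hflat : ∀ k ≤ d, iteratedDerivWithin k g (Icc a b) a = 0) :
    ∃ ξ ∈ Ioo a b,
      g b = iteratedDerivWithin (d + 1) g (Icc a b) ξ * (b - a) ^ (d + 1) / (d + 1)! := by
  have hdiff : DifferentiableOn ℝ (iteratedDerivWithin d g (Icc a b)) (Icc a b) :=
    hg.differentiableOn_iteratedDerivWithin (mod_cast d.lt_succ_self) (uniqueDiffOn_Icc hab)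
  obtain ⟨ξ, hξ, hTaylor⟩ := taylor_mean_remainder_lagrange (n := d) hab.ne
    (by rw [uIcc_of_lt hab]; exact hg.of_succ)
    (by rw [uIcc_of_lt hab, uIoo_of_lt hab]; exact hdiff.mono Ioo_subset_Icc_self)
  have hpoly : taylorWithinEval g d (Icc a b) a b = 0 := by
    rw [taylor_within_apply]
    exact Finset.sum_eq_zero fun k hk => by
      rw [hflat k (Finset.mem_range_succ_iff.mp hk), smul_zero]
  rw [uIcc_of_lt hab, hpoly, sub_zero] at hTaylor
  exact ⟨ξ, by rwa [uIoo_of_lt hab] at hξ, hTaylor⟩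

theorem rigidity_of_nonempty_interior_general
    (n d : ℕ) (f : EuclideanSpace ℝ (Fin n) → ℝ)
    (hf : ContDiffOn ℝ (d + 1) f (closedBall (0 : EuclideanSpace ℝ (Fin n)) 1))
    (hattain : ∃ x ∈ closedBall (0 : EuclideanSpace ℝ (Fin n)) 1, |f x| = 1)
    (Z : Set (EuclideanSpace ℝ (Fin n)))
    (hZ : Z ⊆ closedBall (0 : EuclideanSpace ℝ (Fin n)) 1)
    (hZint : (interior Z).Nonempty)
    (hZzero : ∀ z ∈ Z, f z = 0) :
    ∀ A : ℝ,
      (∀ x ∈ closedBall (0 : EuclideanSpace ℝ (Fin n)) 1,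
        partialsNorm n (d + 1) f x ≤ A) →
      (Nat.factorial (d + 1) : ℝ) / 2 ^ (d + 1) ≤ A := by
  intro A hA
  obtain ⟨x, hxB, hx1⟩ := hattain
  obtain ⟨z, hz⟩ := hZint
  set B := closedBall (0 : EuclideanSpace ℝ (Fin n)) 1
  set v := x - z
  have hB : UniqueDiffOn ℝ B :=
    uniqueDiffOn_convex (convex_closedBall _ _) (by simp [B, interior_closedBall _ one_ne_zero])
  have hseg : MapsTo (fun t : ℝ => z + t • v) (Icc 0 1) B := fun t ht => by
    simpa [B, v, smul_sub] using
      (convex_closedBall _ _).add_smul_sub_mem (hZ (interior_subset hz)) hxB ht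
  have hv : ‖v‖ ≤ 2 := (norm_sub_le x z).trans <| by
    linarith [mem_closedBall_zero_iff.mp hxB,
      mem_closedBall_zero_iff.mp (hZ (interior_subset hz))]
  have hvanish : (fun t : ℝ => f (z + t • v)) =ᶠ[𝓝 0] 0 :=
    ((Continuous.tendsto (by fun_prop) 0).eventually
      (isOpen_interior.mem_nhds (by simpa using hz))).mono
      fun t ht => hZzero _ (interior_subset ht)
  have hg : ContDiffOn ℝ (d + 1) (fun t : ℝ => f (z + t • v)) (Icc 0 1) :=
    hf.comp (by fun_prop) hseg
  obtain ⟨ξ, hξ, hTaylor⟩ := taylor_mean_remainder_lagrange_of_flat one_pos hg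
    fun k _ => iteratedDerivWithin_eq_zero_of_eventuallyEq_zero hvanish k
  rw [iteratedDerivWithin_comp_line (m := d + 1) (by exact_mod_cast hf) hB
    (uniqueDiffOn_Icc one_pos) hseg le_rfl (Ioo_subset_Icc_self hξ)] at hTaylor
  simp only [show z + (1 : ℝ) • v = x by simp [v], sub_zero, one_pow, mul_one] at hTaylor
  set D := iteratedFDerivWithin ℝ (d + 1) f B (z + ξ • v)
  have hDv : |D (fun _ => v)| = (d + 1)! := by
    rwa [hTaylor, abs_div, Nat.abs_cast, div_eq_one_iff_eq (by positivity)] at hx1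
  rw [div_le_iff₀ (by positivity), mul_comm, ← hDv]
  exact (D.norm_apply_const_le_sum_single v hv).trans
    (mul_le_mul_of_nonneg_left (hA _ (hseg (Ioo_subset_Icc_self hξ))) (by positivity))

/-- If `f` is `C^{d+1}` on the closed unit ball `Bⁿ` with `max_{Bⁿ} |f| = 1`, and `f`
vanishes on a set `Z ⊆ Bⁿ` with non-empty interior, then the sup over `Bⁿ` of the norm of
the `(d+1)`-st derivative of `f` is at least `(d+1)!/2^(d+1)`. -/
theorem rigidity_of_nonempty_interior
    (n d : ℕ) (f : EuclideanSpace ℝ (Fin n) → ℝ)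
    (hf : ContDiffOn ℝ (d + 1) f (closedBall (0 : EuclideanSpace ℝ (Fin n)) 1))
    (hbound : ∀ x ∈ closedBall (0 : EuclideanSpace ℝ (Fin n)) 1, |f x| ≤ 1)
    (hattain : ∃ x ∈ closedBall (0 : EuclideanSpace ℝ (Fin n)) 1, |f x| = 1)
    (Z : Set (EuclideanSpace ℝ (Fin n)))
    (hZ : Z ⊆ closedBall (0 : EuclideanSpace ℝ (Fin n)) 1)
    (hZint : (interior Z).Nonempty)
    (hZzero : ∀ z ∈ Z, f z = 0) :
    ∀ A : ℝ,
      (∀ x ∈ closedBall (0 : EuclideanSpace ℝ (Fin n)) 1,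
        partialsNorm n (d + 1) f x ≤ A) →
      (Nat.factorial (d + 1) : ℝ) / 2 ^ (d + 1) ≤ A :=
  rigidity_of_nonempty_interior_general n d f hf hattain Z hZ hZint hZzero
end

section
/- The sum ν_{d+1} of the (positive integer) coefficients appearing in the Faà di Bruno expansion of the (d+1)-st derivative of f(ω(t)), for f : ℝ^n → ℝ, is at most (n+1)^{d+1}·(d+1)^{(d+1)(n+2)}. -/
/-- First-order partial derivative of `f` in the `i`-th coordinate direction. -/
noncomputable def pderivE (n : ℕ) (i : Fin n) (f : EuclideanSpace ℝ (Fin n) → ℝ) :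
    EuclideanSpace ℝ (Fin n) → ℝ :=
  fun x => fderiv ℝ f x (EuclideanSpace.single i 1)

/-- Higher-order partial derivative `∂^α f` for a multi-index `α : Fin n → ℕ`. -/
noncomputable def pderivMulti (n : ℕ) (α : Fin n → ℕ) (f : EuclideanSpace ℝ (Fin n) → ℝ) :
    EuclideanSpace ℝ (Fin n) → ℝ :=
  (List.finRange n).foldr (fun i g => (pderivE n i)^[α i] g) f

namespace FaaAux

/-- increment a multi-index at `i` -/
def addSingle {n : ℕ} (α : Fin n → ℕ) (i : Fin n) : Fin n → ℕ :=
  fun j => if j = i then α j + 1 else α j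

/-- increment a double index at `(i, j)` -/
def addE {n : ℕ} (β : Fin n → ℕ → ℕ) (i : Fin n) (j : ℕ) : Fin n → ℕ → ℕ :=
  fun i' j' => if i' = i ∧ j' = j then β i' j' + 1 else β i' j'

/-- move one unit of the double index from `(i,j)` to `(i,j+1)` -/
def moveE {n : ℕ} (β : Fin n → ℕ → ℕ) (i : Fin n) (j : ℕ) : Fin n → ℕ → ℕ :=
  fun i' j' => if i' = i ∧ j' = j then β i' j' - 1
    else if i' = i ∧ j' = j + 1 then β i' j' + 1 else β i' j'

theorem contDiff_pderivE {n : ℕ} {g : EuclideanSpace ℝ (Fin n) → ℝ}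
    (hg : ContDiff ℝ (↑(⊤:ℕ∞)) g) (i : Fin n) : ContDiff ℝ (↑(⊤:ℕ∞)) (pderivE n i g) :=
  (hg.fderiv_right (le_of_eq (by simp))).clm_apply contDiff_const

theorem pderivE_comm {n : ℕ} {g : EuclideanSpace ℝ (Fin n) → ℝ} (hg : ContDiff ℝ (↑(⊤:ℕ∞)) g)
    (i k : Fin n) : pderivE n i (pderivE n k g) = pderivE n k (pderivE n i g) := by
  funext x
  have h1 : ∀ y, HasFDerivAt g (fderiv ℝ g y) y := fun y =>
    (hg.differentiable (by simp) y).hasFDerivAt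
  have hf' : ContDiff ℝ (↑(⊤:ℕ∞)) (fderiv ℝ g) := hg.fderiv_right (le_of_eq (by simp))
  have h2 : HasFDerivAt (fderiv ℝ g) (fderiv ℝ (fderiv ℝ g) x) x :=
    (hf'.differentiable (by simp) x).hasFDerivAt
  have symm := second_derivative_symmetric h1 h2
  have key : ∀ v w : EuclideanSpace ℝ (Fin n),
      fderiv ℝ (fun y => fderiv ℝ g y v) x w = fderiv ℝ (fderiv ℝ g) x w v := by
    intro v w
    have h3 : HasFDerivAt (fun y => fderiv ℝ g y v)
        ((ContinuousLinearMap.apply ℝ ℝ v).comp (fderiv ℝ (fderiv ℝ g) x)) x :=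
      (ContinuousLinearMap.apply ℝ ℝ v).hasFDerivAt.comp x h2
    rw [h3.fderiv]
    rfl
  show fderiv ℝ (fun y => fderiv ℝ g y (EuclideanSpace.single k 1)) x (EuclideanSpace.single i 1) = _
  rw [key, symm, ← key]
  rfl

theorem contDiff_pderivE_iter {n : ℕ} {g : EuclideanSpace ℝ (Fin n) → ℝ}
    (hg : ContDiff ℝ (↑(⊤:ℕ∞)) g) (i : Fin n) (m : ℕ) :
    ContDiff ℝ (↑(⊤:ℕ∞)) ((pderivE n i)^[m] g) := by
  induction m with
  | zero => exact hg
  | succ m ih => rw [Function.iterate_succ_apply']; exact contDiff_pderivE ih i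

theorem pderivE_comm_iter {n : ℕ} {g : EuclideanSpace ℝ (Fin n) → ℝ}
    (hg : ContDiff ℝ (↑(⊤:ℕ∞)) g) (i k : Fin n) (m : ℕ) :
    pderivE n i ((pderivE n k)^[m] g) = (pderivE n k)^[m] (pderivE n i g) := by
  induction m with
  | zero => rfl
  | succ m ih =>
      rw [Function.iterate_succ_apply', Function.iterate_succ_apply',
        pderivE_comm (contDiff_pderivE_iter hg k m) i k, ih]

theorem contDiff_foldr {n : ℕ} (α : Fin n → ℕ) :
    ∀ (l : List (Fin n)) {g : EuclideanSpace ℝ (Fin n) → ℝ}, ContDiff ℝ (↑(⊤:ℕ∞)) g →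
    ContDiff ℝ (↑(⊤:ℕ∞)) (l.foldr (fun i h => (pderivE n i)^[α i] h) g)
  | [], _, hg => hg
  | k :: l, _, hg => contDiff_pderivE_iter (contDiff_foldr α l hg) k (α k)

theorem foldr_congr {n : ℕ} {α α' : Fin n → ℕ} (g : EuclideanSpace ℝ (Fin n) → ℝ) :
    ∀ (l : List (Fin n)), (∀ k ∈ l, α k = α' k) →
    l.foldr (fun i h => (pderivE n i)^[α i] h) g = l.foldr (fun i h => (pderivE n i)^[α' i] h) g
  | [], _ => rfl
  | k :: l, h => by
      simp only [List.foldr_cons]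
      rw [foldr_congr g l (fun j hj => h j (List.mem_cons_of_mem _ hj)),
        h k (List.mem_cons_self)]

theorem pd_foldr {n : ℕ} {g : EuclideanSpace ℝ (Fin n) → ℝ} (hg : ContDiff ℝ (↑(⊤:ℕ∞)) g)
    (i : Fin n) (α : Fin n → ℕ) :
    ∀ (l : List (Fin n)), l.Nodup → i ∈ l →
    pderivE n i (l.foldr (fun k h => (pderivE n k)^[α k] h) g)
      = l.foldr (fun k h => (pderivE n k)^[addSingle α i k] h) g := by
  intro l
  induction l with
  | nil => intro _ hi; exact absurd hi List.not_mem_nil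
  | cons b l ih =>
      intro hnd hi
      simp only [List.foldr_cons]
      by_cases hbi : b = i
      · subst hbi
        have hbl : b ∉ l := (List.nodup_cons.mp hnd).1
        have h1 : l.foldr (fun j h => (pderivE n j)^[addSingle α b j] h) g
            = l.foldr (fun j h => (pderivE n j)^[α j] h) g :=
          foldr_congr g l (fun j hj => by
            have hjb : j ≠ b := fun h => hbl (h ▸ hj)
            simp [addSingle, hjb])
        rw [h1]
        have hα : addSingle α b b = α b + 1 := by simp [addSingle]
        rw [hα, Function.iterate_succ_apply']
      · have hil : i ∈ l := by
          rcases List.mem_cons.mp hi with h | h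
          · exact absurd h.symm hbi
          · exact h
        have hsm : ContDiff ℝ (↑(⊤:ℕ∞)) (l.foldr (fun j h => (pderivE n j)^[α j] h) g) :=
          contDiff_foldr α l hg
        rw [pderivE_comm_iter hsm i b (α b), ih (List.nodup_cons.mp hnd).2 hil]
        have : addSingle α i b = α b := by simp [addSingle, hbi]
        rw [this]

theorem pderivE_pderivMulti {n : ℕ} {f : EuclideanSpace ℝ (Fin n) → ℝ}
    (hf : ContDiff ℝ (↑(⊤:ℕ∞)) f) (i : Fin n) (α : Fin n → ℕ) :
    pderivE n i (pderivMulti n α f) = pderivMulti n (addSingle α i) f := by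
  have := pd_foldr hf i α (List.finRange n) (List.nodup_finRange n) (List.mem_finRange i)
  rw [pderivMulti, this, pderivMulti]

theorem contDiff_pderivMulti {n : ℕ} {f : EuclideanSpace ℝ (Fin n) → ℝ}
    (hf : ContDiff ℝ (↑(⊤:ℕ∞)) f) (α : Fin n → ℕ) :
    ContDiff ℝ (↑(⊤:ℕ∞)) (pderivMulti n α f) := contDiff_foldr α _ hf

theorem basis_decomp {n : ℕ} (x : EuclideanSpace ℝ (Fin n)) :
    ∑ i, x i • EuclideanSpace.single i (1:ℝ) = x := by
  ext j
  have : (∑ i, x i • EuclideanSpace.single i (1:ℝ)) j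
      = ∑ i, (x i • EuclideanSpace.single i (1:ℝ)) j :=
    by simp [WithLp.ofLp_sum, Finset.sum_apply, Pi.single_apply]
  rw [this]
  simp [EuclideanSpace.single_apply]

theorem chain_rule {n : ℕ} {g : EuclideanSpace ℝ (Fin n) → ℝ} {ω : ℝ → EuclideanSpace ℝ (Fin n)}
    (hg : ContDiff ℝ (↑(⊤:ℕ∞)) g) (hω : ContDiff ℝ (↑(⊤:ℕ∞)) ω) (t : ℝ) :
    HasDerivAt (fun u => g (ω u))
      (∑ i, pderivE n i g (ω t) * deriv (fun u => ω u i) t) t := by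
  have hωd : HasDerivAt ω (deriv ω t) t :=
    (hω.differentiable (by simp) t).hasDerivAt
  have hgd : HasFDerivAt g (fderiv ℝ g (ω t)) (ω t) :=
    (hg.differentiable (by simp) (ω t)).hasFDerivAt
  have hcomp := hgd.comp_hasDerivAt t hωd
  have hcoord : ∀ i : Fin n, deriv (fun u => ω u i) t = deriv ω t i := by
    intro i
    have h := (EuclideanSpace.proj (𝕜 := ℝ) i).hasFDerivAt.comp_hasDerivAt t hωd
    have h2 : HasDerivAt (fun u => ω u i) (deriv ω t i) t := h
    exact h2.deriv
  have hval : fderiv ℝ g (ω t) (deriv ω t)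
      = ∑ i, pderivE n i g (ω t) * deriv (fun u => ω u i) t := by
    conv_lhs => rw [← basis_decomp (deriv ω t)]
    rw [map_sum]
    refine Finset.sum_congr rfl fun i _ => ?_
    rw [ContinuousLinearMap.map_smul, hcoord i]
    simp [pderivE, smul_eq_mul, mul_comm]
  exact hval ▸ hcomp

theorem contDiff_coord {n : ℕ} {ω : ℝ → EuclideanSpace ℝ (Fin n)}
    (hω : ContDiff ℝ (↑(⊤:ℕ∞)) ω) (i : Fin n) : ContDiff ℝ (↑(⊤:ℕ∞)) (fun u => ω u i) :=
  (EuclideanSpace.proj (𝕜 := ℝ) i).contDiff.comp hω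

theorem hasDerivAt_iteratedDeriv_coord {n : ℕ} {ω : ℝ → EuclideanSpace ℝ (Fin n)}
    (hω : ContDiff ℝ (↑(⊤:ℕ∞)) ω) (i : Fin n) (j : ℕ) (t : ℝ) :
    HasDerivAt (iteratedDeriv j (fun u => ω u i))
      (iteratedDeriv (j+1) (fun u => ω u i) t) t := by
  have hs : ContDiff ℝ (↑(⊤:ℕ∞)) (iteratedDeriv j (fun u => ω u i)) := by
    rw [iteratedDeriv_eq_iterate]
    exact ContDiff.iterate_deriv j (contDiff_coord hω i)
  have hd : HasDerivAt (iteratedDeriv j (fun u => ω u i))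
      (deriv (iteratedDeriv j (fun u => ω u i)) t) t :=
    (hs.differentiable (by simp) t).hasDerivAt
  rwa [← iteratedDeriv_succ] at hd



abbrev PairT (n : ℕ) := (Fin n → ℕ) × (Fin n → ℕ → ℕ)

/-- the `(i,j)`-indexed coordinate derivative functions -/
noncomputable def XD (ω : ℝ → EuclideanSpace ℝ (Fin n)) (q : Fin n × ℕ) (t : ℝ) : ℝ :=
  iteratedDeriv q.2 (fun u => ω u q.1) t


/-- one differentiation step on a weighted pair -/
def stepList (n m : ℕ) (pk : PairT n × ℕ) : List (PairT n × ℕ) :=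
  ((List.finRange n).map (fun i => ((addSingle pk.1.1 i, addE pk.1.2 i 1), pk.2)))
  ++ ((List.finRange n).flatMap (fun i =>
      (List.range (m+1)).map (fun jj =>
        ((pk.1.1, moveE pk.1.2 i (1+jj)), pk.2 * pk.1.2 i (1+jj)))))

theorem list_range_sum {M : Type*} [AddCommMonoid M] (g : ℕ → M) :
    ∀ k : ℕ, ((List.range k).map g).sum = ∑ j ∈ Finset.range k, g j
  | 0 => rfl
  | (k+1) => by
      rw [List.range_succ, List.map_append, List.sum_append, Finset.sum_range_succ,
        list_range_sum g k]
      simp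

theorem list_finRange_sum {M : Type*} [AddCommMonoid M] (g : Fin n → M) :
    ((List.finRange n).map g).sum = ∑ i, g i := (Fin.sum_univ_def g).symm

theorem sum_map_flatMap {A B M : Type*} [AddCommMonoid M] (F : B → M) (g : A → List B) :
    ∀ l : List A, ((l.flatMap g).map F).sum = (l.map (fun a => ((g a).map F).sum)).sum
  | [] => rfl
  | a :: l => by
      rw [List.flatMap_cons, List.map_append, List.sum_append, List.map_cons, List.sum_cons,
        sum_map_flatMap F g l]

theorem sum_Icc_one_eq (M : Type*) [AddCommMonoid M] (m : ℕ) (g : ℕ → M) :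
    ∑ j ∈ Finset.Icc 1 (m+1), g j = ∑ jj ∈ Finset.range (m+1), g (1+jj) := by
  rw [← Finset.Ico_add_one_right_eq_Icc, Finset.sum_Ico_eq_sum_range]
  norm_num


variable {n : ℕ}

noncomputable def Tterm (f : EuclideanSpace ℝ (Fin n) → ℝ) (ω : ℝ → EuclideanSpace ℝ (Fin n))
    (m : ℕ) (p : PairT n) (t : ℝ) : ℝ :=
  pderivMulti n p.1 f (ω t) *
    ∏ i, ∏ j ∈ Finset.Icc 1 m, (iteratedDeriv j (fun u => ω u i) t) ^ (p.2 i j)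

section Step

variable {f : EuclideanSpace ℝ (Fin n) → ℝ} {ω : ℝ → EuclideanSpace ℝ (Fin n)}
variable (hf : ContDiff ℝ (↑(⊤:ℕ∞)) f) (hω : ContDiff ℝ (↑(⊤:ℕ∞)) ω)

/-- the index finset -/
def Sfin (n m : ℕ) : Finset (Fin n × ℕ) := (Finset.univ : Finset (Fin n)) ×ˢ Finset.Icc 1 (m+1)

theorem Tterm_prod_eq (m : ℕ) (β : Fin n → ℕ → ℕ) (t : ℝ) :
    (∏ i, ∏ j ∈ Finset.Icc 1 (m+1), (iteratedDeriv j (fun u => ω u i) t) ^ (β i j))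
      = ∏ q ∈ Sfin n m, XD ω q t ^ β q.1 q.2 := by
  rw [Sfin, Finset.prod_product]
  rfl

theorem Tterm_eq_sfin (m : ℕ) (α : Fin n → ℕ) (β : Fin n → ℕ → ℕ)
    (hsupp : ∀ i j, β i j ≠ 0 → 1 ≤ j ∧ j ≤ m) (t : ℝ) :
    Tterm f ω m (α, β) t = pderivMulti n α f (ω t) * ∏ q ∈ Sfin n m, XD ω q t ^ β q.1 q.2 := by
  rw [Tterm, ← Tterm_prod_eq]
  congr 1
  refine Finset.prod_congr rfl fun i _ => ?_
  rw [Finset.prod_Icc_succ_top (Nat.one_le_iff_ne_zero.mpr (Nat.succ_ne_zero m))]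
  have hz : β i (m+1) = 0 := by
    by_contra h
    exact absurd ((hsupp i (m+1) h).2) (by omega)
  rw [hz, pow_zero, mul_one]

theorem part1_eq (m : ℕ) (α : Fin n → ℕ) (β : Fin n → ℕ → ℕ) (i : Fin n) (t : ℝ) :
    Tterm f ω (m+1) (addSingle α i, addE β i 1) t
      = pderivMulti n (addSingle α i) f (ω t) *
        (XD ω (i,1) t * ∏ q ∈ Sfin n m, XD ω q t ^ β q.1 q.2) := by
  have hmem : ((i, 1) : Fin n × ℕ) ∈ Sfin n m := by
    simp [Sfin, Finset.mem_product]
  have h2 : ∀ q ∈ (Sfin n m).erase (i,1), XD ω q t ^ addE β i 1 q.1 q.2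
      = XD ω q t ^ β q.1 q.2 := by
    intro q hq
    have hne : q ≠ (i,1) := Finset.ne_of_mem_erase hq
    have : ¬(q.1 = i ∧ q.2 = 1) := by
      intro ⟨h1', h2'⟩
      exact hne (Prod.ext h1' h2')
    rw [addE]
    simp [this]
  have hp : ∏ q ∈ Sfin n m, XD ω q t ^ addE β i 1 q.1 q.2
      = XD ω (i,1) t * ∏ q ∈ Sfin n m, XD ω q t ^ β q.1 q.2 := by
    rw [← Finset.mul_prod_erase (Sfin n m) (fun q => XD ω q t ^ addE β i 1 q.1 q.2) hmem,
        ← Finset.mul_prod_erase (Sfin n m) (fun q => XD ω q t ^ β q.1 q.2) hmem]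
    dsimp only
    rw [Finset.prod_congr rfl h2]
    have h1 : addE β i 1 i 1 = β i 1 + 1 := by simp [addE]
    rw [h1, pow_succ']
    ring
  rw [Tterm, Tterm_prod_eq]
  dsimp only
  rw [hp]

theorem part2_eq (m : ℕ) (α : Fin n → ℕ) (β : Fin n → ℕ → ℕ)
    (hsupp : ∀ i j, β i j ≠ 0 → 1 ≤ j ∧ j ≤ m) (k : ℕ) (i : Fin n) (j : ℕ)
    (hj1 : 1 ≤ j) (t : ℝ) :
    ((k * β i j : ℕ) : ℝ) * Tterm f ω (m+1) (α, moveE β i j) t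
      = (k : ℝ) * (pderivMulti n α f (ω t) *
          ((∏ r ∈ (Sfin n m).erase (i,j), XD ω r t ^ β r.1 r.2) •
            ((β i j : ℝ) * XD ω (i,j) t ^ (β i j - 1) * XD ω (i, j+1) t))) := by
  rcases Nat.eq_zero_or_pos (β i j) with hb | hb
  · rw [hb]; simp
  · obtain ⟨b, hbb⟩ : ∃ b, β i j = b + 1 := ⟨β i j - 1, by omega⟩
    have hjm : j ≤ m := (hsupp i j (by omega)).2
    have hq : ((i, j) : Fin n × ℕ) ∈ Sfin n m := by
      simp only [Sfin, Finset.mem_product, Finset.mem_univ, true_and, Finset.mem_Icc]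
      omega
    have hq' : ((i, j+1) : Fin n × ℕ) ∈ (Sfin n m).erase (i, j) := by
      rw [Finset.mem_erase]
      refine ⟨?_, ?_⟩
      · intro h
        have := congrArg Prod.snd h
        simp at this
      · simp only [Sfin, Finset.mem_product, Finset.mem_univ, true_and, Finset.mem_Icc]
        omega
    have hm1 : moveE β i j i j = b := by simp [moveE, hbb]
    have hm2 : moveE β i j i (j+1) = β i (j+1) + 1 := by
      have : ¬ (j + 1 = j) := by omega
      simp [moveE, this]
    have hm3 : ∀ q ∈ ((Sfin n m).erase (i,j)).erase (i,j+1),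
        XD ω q t ^ moveE β i j q.1 q.2 = XD ω q t ^ β q.1 q.2 := by
      intro q hq''
      have hne1 : q ≠ (i,j+1) := Finset.ne_of_mem_erase hq''
      have hne2 : q ≠ (i,j) := Finset.ne_of_mem_erase (Finset.mem_of_mem_erase hq'')
      have c1 : ¬(q.1 = i ∧ q.2 = j) := fun ⟨a,b'⟩ => hne2 (Prod.ext a b')
      have c2 : ¬(q.1 = i ∧ q.2 = j+1) := fun ⟨a,b'⟩ => hne1 (Prod.ext a b')
      rw [moveE]
      simp [c1, c2]
    have hp : ∏ q ∈ Sfin n m, XD ω q t ^ moveE β i j q.1 q.2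
        = XD ω (i,j) t ^ b * (XD ω (i,j+1) t ^ (β i (j+1) + 1) *
            ∏ q ∈ ((Sfin n m).erase (i,j)).erase (i,j+1), XD ω q t ^ β q.1 q.2) := by
      rw [← Finset.mul_prod_erase (Sfin n m)
            (fun q => XD ω q t ^ moveE β i j q.1 q.2) hq,
          ← Finset.mul_prod_erase ((Sfin n m).erase (i,j))
            (fun q => XD ω q t ^ moveE β i j q.1 q.2) hq']
      dsimp only
      rw [Finset.prod_congr rfl hm3, hm1, hm2]
    have hp2 : ∏ r ∈ (Sfin n m).erase (i,j), XD ω r t ^ β r.1 r.2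
        = XD ω (i,j+1) t ^ β i (j+1) *
            ∏ q ∈ ((Sfin n m).erase (i,j)).erase (i,j+1), XD ω q t ^ β q.1 q.2 := by
      rw [← Finset.mul_prod_erase ((Sfin n m).erase (i,j))
            (fun q => XD ω q t ^ β q.1 q.2) hq']
    rw [Tterm, Tterm_prod_eq]
    dsimp only
    rw [hp, hp2, hbb, smul_eq_mul]
    have hsub : (b + 1) - 1 = b := by omega
    rw [hsub]
    push_cast
    ring

include hf hω in
theorem step_hasDerivAt (m : ℕ) (α : Fin n → ℕ) (β : Fin n → ℕ → ℕ)
    (hsupp : ∀ i j, β i j ≠ 0 → 1 ≤ j ∧ j ≤ m) (k : ℕ) (t : ℝ) :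
    HasDerivAt (fun s => (k:ℝ) * Tterm f ω m (α,β) s)
      (((stepList n m ((α,β),k)).map
        (fun rk => (rk.2:ℝ) * Tterm f ω (m+1) rk.1 t)).sum) t := by
  -- the two factors
  have hXd : ∀ q : Fin n × ℕ, HasDerivAt (fun s => XD ω q s) (XD ω (q.1, q.2+1) t) t :=
    fun q => hasDerivAt_iteratedDeriv_coord hω q.1 q.2 t
  have hB : HasDerivAt (fun s => ∏ q ∈ Sfin n m, XD ω q s ^ β q.1 q.2)
      (∑ q ∈ Sfin n m, (∏ r ∈ (Sfin n m).erase q, XD ω r t ^ β r.1 r.2) •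
        ((β q.1 q.2 : ℝ) * XD ω q t ^ (β q.1 q.2 - 1) * XD ω (q.1, q.2+1) t)) t :=
    HasDerivAt.fun_finsetProd (fun q _ => HasDerivAt.fun_pow (hXd q) _)
  have hA : HasDerivAt (fun s => pderivMulti n α f (ω s))
      (∑ i, pderivMulti n (addSingle α i) f (ω t) * XD ω (i,1) t) t := by
    have h := chain_rule (contDiff_pderivMulti hf α) hω t
    have heq : (∑ i, pderivE n i (pderivMulti n α f) (ω t) * deriv (fun u => ω u i) t)
        = ∑ i, pderivMulti n (addSingle α i) f (ω t) * XD ω (i,1) t := by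
      refine Finset.sum_congr rfl fun i _ => ?_
      rw [pderivE_pderivMulti hf i α]
      congr 1
      rw [XD]
      simp [iteratedDeriv_one]
    exact heq ▸ h
  have hAB := (hA.mul hB).const_mul (k:ℝ)
  -- identify the function
  have hfun : (fun s => (k:ℝ) * Tterm f ω m (α,β) s)
      = (fun s => (k:ℝ) * (pderivMulti n α f (ω s) *
          ∏ q ∈ Sfin n m, XD ω q s ^ β q.1 q.2)) := by
    funext s
    rw [Tterm_eq_sfin m α β hsupp s]
  -- identify the value
  have hval : ((stepList n m ((α,β),k)).map
        (fun rk => (rk.2:ℝ) * Tterm f ω (m+1) rk.1 t)).sum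
      = (k:ℝ) * ((∑ i, pderivMulti n (addSingle α i) f (ω t) * XD ω (i,1) t) *
          (∏ q ∈ Sfin n m, XD ω q t ^ β q.1 q.2)
        + pderivMulti n α f (ω t) *
          (∑ q ∈ Sfin n m, (∏ r ∈ (Sfin n m).erase q, XD ω r t ^ β r.1 r.2) •
            ((β q.1 q.2 : ℝ) * XD ω q t ^ (β q.1 q.2 - 1) * XD ω (q.1, q.2+1) t))) := by
    rw [stepList, List.map_append, List.sum_append]
    have hpart1 : ((List.map (fun i => ((addSingle α i, addE β i 1), k)) (List.finRange n)).map
          (fun rk => (rk.2:ℝ) * Tterm f ω (m+1) rk.1 t)).sum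
        = (k:ℝ) * ((∑ i, pderivMulti n (addSingle α i) f (ω t) * XD ω (i,1) t) *
            (∏ q ∈ Sfin n m, XD ω q t ^ β q.1 q.2)) := by
      rw [List.map_map, list_finRange_sum, Finset.sum_mul, Finset.mul_sum]
      refine Finset.sum_congr rfl fun i _ => ?_
      show (k:ℝ) * Tterm f ω (m+1) (addSingle α i, addE β i 1) t = _
      rw [part1_eq]
      ring
    have hpart2 : (((List.finRange n).flatMap (fun i =>
          (List.range (m+1)).map (fun jj =>
            ((α, moveE β i (1+jj)), k * β i (1+jj))))).map
          (fun rk => (rk.2:ℝ) * Tterm f ω (m+1) rk.1 t)).sum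
        = (k:ℝ) * (pderivMulti n α f (ω t) *
            (∑ q ∈ Sfin n m, (∏ r ∈ (Sfin n m).erase q, XD ω r t ^ β r.1 r.2) •
              ((β q.1 q.2 : ℝ) * XD ω q t ^ (β q.1 q.2 - 1) * XD ω (q.1, q.2+1) t))) := by
      rw [sum_map_flatMap, list_finRange_sum]
      have hq : ∀ i : Fin n,
          (((List.range (m+1)).map (fun jj =>
            ((α, moveE β i (1+jj)), k * β i (1+jj)))).map
            (fun rk => (rk.2:ℝ) * Tterm f ω (m+1) rk.1 t)).sum
          = ∑ jj ∈ Finset.range (m+1),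
              ((k * β i (1+jj) : ℕ) : ℝ) * Tterm f ω (m+1) (α, moveE β i (1+jj)) t := by
        intro i
        rw [List.map_map, list_range_sum]
        rfl
      rw [Finset.sum_congr rfl (fun i _ => hq i)]
      rw [Sfin, Finset.sum_product, Finset.mul_sum, Finset.mul_sum]
      refine Finset.sum_congr rfl fun i _ => ?_
      rw [sum_Icc_one_eq, Finset.mul_sum, Finset.mul_sum]
      refine Finset.sum_congr rfl fun jj _ => ?_
      have := part2_eq (f := f) (ω := ω) m α β hsupp k i (1+jj) (by omega) t
      rw [this]
      rfl
    rw [hpart1, hpart2]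
    ring
  rw [hfun, hval]
  exact hAB

theorem step_coeff_zero (m : ℕ) (p : PairT n) :
    ∀ rk ∈ stepList n m (p, 0), rk.2 = 0 := by
  intro rk hrk
  rcases List.mem_append.mp hrk with h | h
  · obtain ⟨i, _, rfl⟩ := List.mem_map.mp h
    rfl
  · obtain ⟨i, _, hi⟩ := List.mem_flatMap.mp h
    obtain ⟨jj, _, rfl⟩ := List.mem_map.mp hi
    exact Nat.zero_mul _

include hf hω in
theorem step_hasDerivAt' (m : ℕ) (p : PairT n) (k : ℕ)
    (hsupp : k ≠ 0 → ∀ i j, p.2 i j ≠ 0 → 1 ≤ j ∧ j ≤ m) (t : ℝ) :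
    HasDerivAt (fun s => (k:ℝ) * Tterm f ω m p s)
      (((stepList n m (p,k)).map
        (fun rk => (rk.2:ℝ) * Tterm f ω (m+1) rk.1 t)).sum) t := by
  rcases Nat.eq_zero_or_pos k with hk | hk
  · subst hk
    have h1 : (fun s => ((0:ℕ):ℝ) * Tterm f ω m p s) = fun _ => (0:ℝ) := by
      funext s; simp
    have h2 : ((stepList n m (p,0)).map
        (fun rk => (rk.2:ℝ) * Tterm f ω (m+1) rk.1 t)).sum = 0 := by
      apply List.sum_eq_zero
      intro x hx
      obtain ⟨rk, hrk, rfl⟩ := List.mem_map.mp hx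
      rw [step_coeff_zero m p rk hrk]
      simp
    rw [h1, h2]
    exact hasDerivAt_const t 0
  · obtain ⟨α, β⟩ := p
    exact step_hasDerivAt hf hω m α β (hsupp (by omega)) k t

/-- structural invariant -/
def Good (m : ℕ) (p : PairT n) : Prop :=
  (∑ i, p.1 i ≤ m) ∧ (∀ i j, p.2 i j ≠ 0 → 1 ≤ j ∧ j ≤ m) ∧
  (∀ i, ∑ j ∈ Finset.Icc 1 m, p.2 i j = p.1 i) ∧
  (∑ i, ∑ j ∈ Finset.Icc 1 m, j * p.2 i j = m)

theorem sum_ite_one {j : ℕ} (s : Finset ℕ) (hj : j ∈ s) :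
    ∑ j' ∈ s, (if j' = j then (1:ℕ) else 0) = 1 := by
  rw [Finset.sum_ite_eq' s j (fun _ => (1:ℕ))]
  simp [hj]

theorem sum_ite_wt {j : ℕ} (s : Finset ℕ) (hj : j ∈ s) :
    ∑ j' ∈ s, j' * (if j' = j then (1:ℕ) else 0) = j := by
  have : ∀ j' ∈ s, j' * (if j' = j then (1:ℕ) else 0) = if j' = j then j' else 0 := by
    intro j' _; split_ifs <;> simp
  rw [Finset.sum_congr rfl this, Finset.sum_ite_eq' s j (fun j' => j')]
  simp [hj]

theorem addE_eq {β : Fin n → ℕ → ℕ} {i : Fin n} {j : ℕ} (i' : Fin n) (j' : ℕ) :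
    addE β i j i' j' = β i' j' + (if i' = i ∧ j' = j then 1 else 0) := by
  rw [addE]; split_ifs <;> omega

theorem moveE_eq {β : Fin n → ℕ → ℕ} {i : Fin n} {j : ℕ} (hb : β i j ≠ 0) (i' : Fin n) (j' : ℕ) :
    moveE β i j i' j' + (if i' = i ∧ j' = j then 1 else 0)
      = β i' j' + (if i' = i ∧ j' = j + 1 then 1 else 0) := by
  by_cases h1 : i' = i ∧ j' = j
  · obtain ⟨h1a, h1b⟩ := h1
    subst h1a; subst h1b
    have hc : ¬ (j' = j' + 1) := by omega
    have e1 : moveE β i' j' i' j' = β i' j' - 1 := by simp [moveE]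
    have e2 : (if i' = i' ∧ j' = j' then (1:ℕ) else 0) = 1 := by simp
    have e3 : (if i' = i' ∧ j' = j' + 1 then (1:ℕ) else 0) = 0 := by simp [hc]
    rw [e1, e2, e3]
    omega
  · by_cases h2 : i' = i ∧ j' = j + 1
    · obtain ⟨h2a, h2b⟩ := h2
      subst h2a; subst h2b
      have hc : ¬ (j + 1 = j) := by omega
      have e1 : moveE β i' j i' (j+1) = β i' (j+1) + 1 := by simp [moveE, hc]
      have e2 : (if i' = i' ∧ j + 1 = j then (1:ℕ) else 0) = 0 := by simp [hc]
      have e3 : (if i' = i' ∧ j + 1 = j + 1 then (1:ℕ) else 0) = 1 := by simp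
      rw [e1, e2, e3]
    · have e1 : moveE β i j i' j' = β i' j' := by
        simp only [moveE]
        rw [if_neg h1, if_neg h2]
      rw [e1, if_neg h1, if_neg h2]

theorem good_top_zero {m : ℕ} {p : PairT n} (hg : Good m p) (i : Fin n) : p.2 i (m+1) = 0 := by
  by_contra h
  exact absurd (hg.2.1 i (m+1) h).2 (by omega)

theorem good_row_succ {m : ℕ} {p : PairT n} (hg : Good m p) (i : Fin n) :
    ∑ j ∈ Finset.Icc 1 (m+1), p.2 i j = p.1 i := by
  rw [Finset.sum_Icc_succ_top (by omega), good_top_zero hg i]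
  rw [hg.2.2.1 i]
  omega

theorem good_wt_succ {m : ℕ} {p : PairT n} (hg : Good m p) :
    ∑ i, ∑ j ∈ Finset.Icc 1 (m+1), j * p.2 i j = m := by
  have h : ∀ i ∈ (Finset.univ : Finset (Fin n)), ∑ j ∈ Finset.Icc 1 (m+1), j * p.2 i j
      = ∑ j ∈ Finset.Icc 1 m, j * p.2 i j := by
    intro i _
    rw [Finset.sum_Icc_succ_top (by omega), good_top_zero hg i, Nat.mul_zero, Nat.add_zero]
  rw [Finset.sum_congr rfl h]
  exact hg.2.2.2

theorem step_good {m : ℕ} {p : PairT n} {k : ℕ} (hg : Good m p) :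
    ∀ rk ∈ stepList n m (p, k), rk.2 ≠ 0 → Good (m+1) rk.1 := by
  obtain ⟨α, β⟩ := p
  have hSa : ∑ i', α i' ≤ m := hg.1
  have hsup : ∀ i' j', β i' j' ≠ 0 → 1 ≤ j' ∧ j' ≤ m := hg.2.1
  have hrow : ∀ i', ∑ j' ∈ Finset.Icc 1 (m+1), β i' j' = α i' := fun i' => good_row_succ hg i'
  have hwt : ∑ i', ∑ j' ∈ Finset.Icc 1 (m+1), j' * β i' j' = m := good_wt_succ hg
  intro rk hrk hne
  rcases List.mem_append.mp hrk with h | h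
  · -- part 1 : differentiate f
    obtain ⟨i, _, rfl⟩ := List.mem_map.mp h
    refine ⟨?_, ?_, ?_, ?_⟩
    · -- sum of α
      show ∑ i', addSingle α i i' ≤ m + 1
      have : ∑ i', addSingle α i i' = (∑ i', α i') + 1 := by
        have hpt : ∀ i' ∈ (Finset.univ : Finset (Fin n)),
            addSingle α i i' = α i' + (if i' = i then 1 else 0) := by
          intro i' _; rw [addSingle]; split_ifs <;> omega
        rw [Finset.sum_congr rfl hpt, Finset.sum_add_distrib,
          Finset.sum_ite_eq' Finset.univ i (fun _ => (1:ℕ))]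
        simp
      omega
    · show ∀ i' j', addE β i 1 i' j' ≠ 0 → 1 ≤ j' ∧ j' ≤ m + 1
      intro i' j' hnz
      rw [addE_eq] at hnz
      by_cases hc : i' = i ∧ j' = 1
      · omega
      · simp only [hc, if_false, Nat.add_zero] at hnz
        have := hsup i' j' hnz
        omega
    · intro i'
      have hpt : ∀ j' ∈ Finset.Icc 1 (m+1), addE β i 1 i' j'
          = β i' j' + (if j' = 1 then (if i' = i then 1 else 0) else 0) := by
        intro j' _
        rw [addE_eq]
        by_cases h1 : i' = i <;> by_cases h2 : j' = 1 <;> simp [h1, h2]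
      show ∑ j' ∈ Finset.Icc 1 (m+1), addE β i 1 i' j' = addSingle α i i'
      rw [Finset.sum_congr rfl hpt, Finset.sum_add_distrib, hrow i']
      by_cases h1 : i' = i
      · have : ∀ j' ∈ Finset.Icc 1 (m+1), (if j' = 1 then (if i' = i then (1:ℕ) else 0) else 0)
            = (if j' = 1 then 1 else 0) := by intro j' _; simp [h1]
        rw [Finset.sum_congr rfl this, sum_ite_one (Finset.Icc 1 (m+1)) (by simp)]
        rw [addSingle]
        simp [h1]
      · have : ∀ j' ∈ Finset.Icc 1 (m+1), (if j' = 1 then (if i' = i then (1:ℕ) else 0) else 0)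
            = 0 := by intro j' _; simp [h1]
        rw [Finset.sum_congr rfl this, Finset.sum_const_zero]
        rw [addSingle]
        simp [h1]
    · show ∑ i', ∑ j' ∈ Finset.Icc 1 (m+1), j' * addE β i 1 i' j' = m + 1
      have hpt : ∀ i', ∑ j' ∈ Finset.Icc 1 (m+1), j' * addE β i 1 i' j'
          = (∑ j' ∈ Finset.Icc 1 (m+1), j' * β i' j') + (if i' = i then 1 else 0) := by
        intro i'
        have h2 : ∀ j' ∈ Finset.Icc 1 (m+1), j' * addE β i 1 i' j'
            = j' * β i' j' + j' * (if i' = i ∧ j' = 1 then 1 else 0) := by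
          intro j' _; rw [addE_eq, Nat.mul_add]
        rw [Finset.sum_congr rfl h2, Finset.sum_add_distrib]
        by_cases h1 : i' = i
        · have h3 : ∀ j' ∈ Finset.Icc 1 (m+1), j' * (if i' = i ∧ j' = 1 then (1:ℕ) else 0)
              = j' * (if j' = 1 then 1 else 0) := by intro j' _; simp [h1]
          rw [Finset.sum_congr rfl h3, sum_ite_wt (Finset.Icc 1 (m+1)) (by simp), if_pos h1]
        · have h3 : ∀ j' ∈ Finset.Icc 1 (m+1), j' * (if i' = i ∧ j' = 1 then (1:ℕ) else 0)
              = 0 := by intro j' _; simp [h1]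
          rw [Finset.sum_congr rfl h3, Finset.sum_const_zero, if_neg h1]
      rw [Finset.sum_congr rfl (fun i' _ => hpt i'), Finset.sum_add_distrib,
        hwt, Finset.sum_ite_eq' Finset.univ i (fun _ => (1:ℕ))]
      simp
  · -- part 2 : move a derivative up
    obtain ⟨i, _, hi⟩ := List.mem_flatMap.mp h
    obtain ⟨jj, hjj, rfl⟩ := List.mem_map.mp hi
    simp only [ne_eq, Nat.mul_eq_zero, not_or] at hne
    set j := 1 + jj with hj
    have hbnz : β i j ≠ 0 := hne.2
    have hjm : j ≤ m := (hsup i j hbnz).2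
    have hmv := moveE_eq (i := i) (j := j) hbnz
    refine ⟨?_, ?_, ?_, ?_⟩
    · show ∑ i', α i' ≤ m + 1
      omega
    · show ∀ i' j', moveE β i j i' j' ≠ 0 → 1 ≤ j' ∧ j' ≤ m + 1
      intro i' j' hnz
      have h := hmv i' j'
      by_cases h1 : i' = i ∧ j' = j
      · omega
      · by_cases h2 : i' = i ∧ j' = j + 1
        · omega
        · simp only [h1, if_false, h2, Nat.add_zero] at h
          have := hsup i' j' (by omega)
          omega
    · intro i'
      show ∑ j' ∈ Finset.Icc 1 (m+1), moveE β i j i' j' = α i'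
      have key : (∑ j' ∈ Finset.Icc 1 (m+1), moveE β i j i' j')
            + (∑ j' ∈ Finset.Icc 1 (m+1), (if i' = i ∧ j' = j then (1:ℕ) else 0))
          = (∑ j' ∈ Finset.Icc 1 (m+1), β i' j')
            + (∑ j' ∈ Finset.Icc 1 (m+1), (if i' = i ∧ j' = j + 1 then (1:ℕ) else 0)) := by
        rw [← Finset.sum_add_distrib, ← Finset.sum_add_distrib]
        exact Finset.sum_congr rfl (fun j' _ => hmv i' j')
      have hrow' := hrow i'
      by_cases h1 : i' = i
      · have e1 : ∑ j' ∈ Finset.Icc 1 (m+1), (if i' = i ∧ j' = j then (1:ℕ) else 0) = 1 := by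
          have : ∀ j' ∈ Finset.Icc 1 (m+1), (if i' = i ∧ j' = j then (1:ℕ) else 0)
              = (if j' = j then 1 else 0) := by intro j' _; simp [h1]
          rw [Finset.sum_congr rfl this]
          exact sum_ite_one _ (by simp [Finset.mem_Icc]; omega)
        have e2 : ∑ j' ∈ Finset.Icc 1 (m+1), (if i' = i ∧ j' = j + 1 then (1:ℕ) else 0) = 1 := by
          have : ∀ j' ∈ Finset.Icc 1 (m+1), (if i' = i ∧ j' = j + 1 then (1:ℕ) else 0)
              = (if j' = j + 1 then 1 else 0) := by intro j' _; simp [h1]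
          rw [Finset.sum_congr rfl this]
          exact sum_ite_one _ (by simp [Finset.mem_Icc]; omega)
        rw [e1, e2] at key
        omega
      · have e1 : ∑ j' ∈ Finset.Icc 1 (m+1), (if i' = i ∧ j' = j then (1:ℕ) else 0) = 0 := by
          apply Finset.sum_eq_zero; intro j' _; simp [h1]
        have e2 : ∑ j' ∈ Finset.Icc 1 (m+1), (if i' = i ∧ j' = j + 1 then (1:ℕ) else 0) = 0 := by
          apply Finset.sum_eq_zero; intro j' _; simp [h1]
        rw [e1, e2] at key
        omega
    · show ∑ i', ∑ j' ∈ Finset.Icc 1 (m+1), j' * moveE β i j i' j' = m + 1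
      have key : ∀ i', (∑ j' ∈ Finset.Icc 1 (m+1), j' * moveE β i j i' j')
            + (∑ j' ∈ Finset.Icc 1 (m+1), j' * (if i' = i ∧ j' = j then (1:ℕ) else 0))
          = (∑ j' ∈ Finset.Icc 1 (m+1), j' * β i' j')
            + (∑ j' ∈ Finset.Icc 1 (m+1), j' * (if i' = i ∧ j' = j + 1 then (1:ℕ) else 0)) := by
        intro i'
        rw [← Finset.sum_add_distrib, ← Finset.sum_add_distrib]
        refine Finset.sum_congr rfl (fun j' _ => ?_)
        rw [← Nat.mul_add, ← Nat.mul_add, hmv i' j']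
      have hpt : ∀ i', ∑ j' ∈ Finset.Icc 1 (m+1), j' * moveE β i j i' j'
          = (∑ j' ∈ Finset.Icc 1 (m+1), j' * β i' j') + (if i' = i then 1 else 0) := by
        intro i'
        have k' := key i'
        by_cases h1 : i' = i
        · have e1 : ∑ j' ∈ Finset.Icc 1 (m+1), j' * (if i' = i ∧ j' = j then (1:ℕ) else 0) = j := by
            have : ∀ j' ∈ Finset.Icc 1 (m+1), j' * (if i' = i ∧ j' = j then (1:ℕ) else 0)
                = j' * (if j' = j then 1 else 0) := by intro j' _; simp [h1]
            rw [Finset.sum_congr rfl this]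
            exact sum_ite_wt _ (by simp [Finset.mem_Icc]; omega)
          have e2 : ∑ j' ∈ Finset.Icc 1 (m+1), j' * (if i' = i ∧ j' = j + 1 then (1:ℕ) else 0)
              = j + 1 := by
            have : ∀ j' ∈ Finset.Icc 1 (m+1), j' * (if i' = i ∧ j' = j + 1 then (1:ℕ) else 0)
                = j' * (if j' = j + 1 then 1 else 0) := by intro j' _; simp [h1]
            rw [Finset.sum_congr rfl this]
            exact sum_ite_wt _ (by simp [Finset.mem_Icc]; omega)
          rw [e1, e2] at k'
          rw [if_pos h1]
          omega
        · have e1 : ∑ j' ∈ Finset.Icc 1 (m+1), j' * (if i' = i ∧ j' = j then (1:ℕ) else 0) = 0 := by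
            apply Finset.sum_eq_zero; intro j' _; simp [h1]
          have e2 : ∑ j' ∈ Finset.Icc 1 (m+1), j' * (if i' = i ∧ j' = j + 1 then (1:ℕ) else 0)
              = 0 := by
            apply Finset.sum_eq_zero; intro j' _; simp [h1]
          rw [e1, e2] at k'
          rw [if_neg h1]
          omega
      rw [Finset.sum_congr rfl (fun i' _ => hpt i'), Finset.sum_add_distrib,
        hwt, Finset.sum_ite_eq' Finset.univ i (fun _ => (1:ℕ))]
      simp

include hf hω in
theorem list_hasDerivAt (m : ℕ) (t : ℝ) :
    ∀ L : List (PairT n × ℕ),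
    (∀ pk ∈ L, pk.2 ≠ 0 → ∀ i j, pk.1.2 i j ≠ 0 → 1 ≤ j ∧ j ≤ m) →
    HasDerivAt (fun s => (L.map (fun pk => (pk.2:ℝ) * Tterm f ω m pk.1 s)).sum)
      (((L.flatMap (stepList n m)).map
        (fun rk => (rk.2:ℝ) * Tterm f ω (m+1) rk.1 t)).sum) t
  | [], _ => by
      simp only [List.map_nil, List.sum_nil, List.flatMap_nil]
      exact hasDerivAt_const t 0
  | pk :: L, hL => by
      obtain ⟨p, k⟩ := pk
      rw [List.flatMap_cons, List.map_append, List.sum_append]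
      have h1 := step_hasDerivAt' hf hω m p k
        (fun hk => hL (p,k) (List.mem_cons_self) hk) t
      have h2 := list_hasDerivAt m t L (fun q hq => hL q (List.mem_cons_of_mem _ hq))
      have h3 := h1.add h2
      simp only [List.map_cons, List.sum_cons]
      exact h3

theorem list_sum_le {A : Type*} (F G : A → ℕ) :
    ∀ L : List A, (∀ a ∈ L, F a ≤ G a) → (L.map F).sum ≤ (L.map G).sum
  | [], _ => le_refl 0
  | a :: L, h => by
      simp only [List.map_cons, List.sum_cons]
      exact Nat.add_le_add (h a (List.mem_cons_self))
        (list_sum_le F G L (fun b hb => h b (List.mem_cons_of_mem _ hb)))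

theorem list_sum_mul_left {A : Type*} (c : ℕ) (F : A → ℕ) :
    ∀ L : List A, (L.map (fun a => c * F a)).sum = c * (L.map F).sum
  | [] => by simp
  | a :: L => by
      simp only [List.map_cons, List.sum_cons, list_sum_mul_left c F L, Nat.mul_add]

theorem step_coeff_sum (m : ℕ) (p : PairT n) (k : ℕ) :
    ((stepList n m (p,k)).map Prod.snd).sum
      = n * k + ∑ i, ∑ jj ∈ Finset.range (m+1), k * p.2 i (1+jj) := by
  rw [stepList, List.map_append, List.sum_append]
  congr 1
  · rw [List.map_map, list_finRange_sum]
    simp [Finset.sum_const, Finset.card_univ]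
  · rw [sum_map_flatMap, list_finRange_sum]
    refine Finset.sum_congr rfl fun i _ => ?_
    rw [List.map_map, list_range_sum]
    rfl

theorem step_coeff_bound (m : ℕ) (p : PairT n) (k : ℕ) (hgk : k ≠ 0 → Good m p) :
    ((stepList n m (p,k)).map Prod.snd).sum ≤ (n + m) * k := by
  rcases Nat.eq_zero_or_pos k with hk | hk
  · subst hk
    have : ((stepList n m (p,0)).map Prod.snd).sum = 0 := by
      apply List.sum_eq_zero
      intro x hx
      obtain ⟨rk, hrk, rfl⟩ := List.mem_map.mp hx
      exact step_coeff_zero m p rk hrk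
    rw [this]
    exact Nat.zero_le _
  · have hg := hgk (by omega)
    rw [step_coeff_sum]
    have e : ∑ i, ∑ jj ∈ Finset.range (m+1), k * p.2 i (1+jj) = k * ∑ i, p.1 i := by
      rw [Finset.mul_sum]
      refine Finset.sum_congr rfl fun i _ => ?_
      rw [← Finset.mul_sum, ← sum_Icc_one_eq, good_row_succ hg i]
    rw [e]
    have h1 : k * ∑ i, p.1 i ≤ k * m := Nat.mul_le_mul_left k hg.1
    have h2 : n * k + k * m = (n + m) * k := by ring
    omega

include hf hω in
theorem expansion : ∀ m : ℕ, ∃ L : List (PairT n × ℕ),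
    (∀ pk ∈ L, pk.2 ≠ 0 → Good m pk.1) ∧
    (∀ t, iteratedDeriv m (fun u => f (ω u)) t
        = (L.map (fun pk => (pk.2:ℝ) * Tterm f ω m pk.1 t)).sum) ∧
    (L.map Prod.snd).sum ≤ ((n+1) * m) ^ m := by
  intro m
  induction m with
  | zero =>
      refine ⟨[((fun _ => 0, fun _ _ => 0), 1)], ?_, ?_, ?_⟩
      · intro pk hpk _
        rw [List.mem_singleton] at hpk
        subst hpk
        refine ⟨by simp, ?_, ?_, ?_⟩
        · intro i j h; exact absurd rfl h
        · intro i; simp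
        · simp
      · intro t
        rw [iteratedDeriv_zero]
        have hz : pderivMulti n (fun _ => (0:ℕ)) f = f := by
          rw [pderivMulti]
          induction (List.finRange n) with
          | nil => rfl
          | cons a l ih => simp only [List.foldr_cons]; exact ih
        simp [Tterm, hz]
      · simp
  | succ m ih =>
      obtain ⟨L, hGood, hId, hBound⟩ := ih
      refine ⟨L.flatMap (stepList n m), ?_, ?_, ?_⟩
      · intro rk hrk hne
        obtain ⟨pk, hpk, hrk'⟩ := List.mem_flatMap.mp hrk
        have hpk2 : pk.2 ≠ 0 := by
          intro h0
          apply hne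
          have h1 : rk ∈ stepList n m (pk.1, 0) := by rw [← h0]; exact hrk'
          exact step_coeff_zero m pk.1 rk h1
        exact step_good (hGood pk hpk hpk2) rk hrk' hne
      · intro t
        rw [iteratedDeriv_succ]
        have hEq : iteratedDeriv m (fun u => f (ω u))
            = fun s => (L.map (fun pk => (pk.2:ℝ) * Tterm f ω m pk.1 s)).sum :=
          funext hId
        rw [hEq]
        exact (list_hasDerivAt hf hω m t L
          (fun pk hpk hk i j hb => (hGood pk hpk hk).2.1 i j hb)).deriv
      · have h1 : ((L.flatMap (stepList n m)).map Prod.snd).sum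
            ≤ (n + m) * (L.map Prod.snd).sum := by
          rw [sum_map_flatMap Prod.snd (stepList n m) L, ← list_sum_mul_left]
          exact list_sum_le _ _ L (fun pk hpk =>
            step_coeff_bound m pk.1 pk.2 (fun hk => hGood pk hpk hk))
        have h2 : (n + m) * (L.map Prod.snd).sum ≤ (n + m) * ((n+1) * m) ^ m :=
          Nat.mul_le_mul_left _ hBound
        have h3 : (n + m) * ((n+1) * m) ^ m ≤ ((n+1) * (m+1)) ^ (m+1) := by
          rw [pow_succ']
          exact Nat.mul_le_mul (by nlinarith) (Nat.pow_le_pow_left (by nlinarith) m)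
        omega

end Step
open Classical in
noncomputable def toFinsupp (L : List (PairT n × ℕ)) : PairT n →₀ ℕ :=
  L.foldr (fun pk acc => Finsupp.single pk.1 pk.2 + acc) 0

theorem toFinsupp_sum_real (T : PairT n → ℝ) :
    ∀ L : List (PairT n × ℕ),
    ((toFinsupp L).sum fun p k => (k:ℝ) * T p)
      = (L.map (fun pk => (pk.2:ℝ) * T pk.1)).sum
  | [] => by simp [toFinsupp]
  | pk :: L => by
      classical
      have : toFinsupp (pk :: L) = Finsupp.single pk.1 pk.2 + toFinsupp L := rfl
      rw [this, Finsupp.sum_add_index' (fun a => by simp) (fun a b₁ b₂ => by push_cast; ring),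
        Finsupp.sum_single_index (by simp), List.map_cons, List.sum_cons,
        toFinsupp_sum_real T L]

theorem toFinsupp_sum_nat :
    ∀ L : List (PairT n × ℕ),
    ((toFinsupp L).sum fun _ k => k) = (L.map Prod.snd).sum
  | [] => by simp [toFinsupp]
  | pk :: L => by
      classical
      have : toFinsupp (pk :: L) = Finsupp.single pk.1 pk.2 + toFinsupp L := rfl
      rw [this, Finsupp.sum_add_index' (fun a => rfl) (fun a b₁ b₂ => rfl),
        Finsupp.sum_single_index rfl, List.map_cons, List.sum_cons, toFinsupp_sum_nat L]

theorem toFinsupp_support_mem :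
    ∀ L : List (PairT n × ℕ), ∀ p ∈ (toFinsupp L).support, ∃ k, k ≠ 0 ∧ (p, k) ∈ L
  | [] => by simp [toFinsupp]
  | pk :: L => by
      classical
      intro p hp
      have hT : toFinsupp (pk :: L) = Finsupp.single pk.1 pk.2 + toFinsupp L := rfl
      rw [hT] at hp
      rcases Finset.mem_union.mp (Finsupp.support_add hp) with h | h
      · have h1 : Finsupp.single pk.1 pk.2 p ≠ 0 := Finsupp.mem_support_iff.mp h
        rw [Finsupp.single_apply] at h1
        by_cases he : pk.1 = p
        · refine ⟨pk.2, ?_, ?_⟩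
          · rwa [if_pos he] at h1
          · rw [← he]
            exact List.mem_cons_self
        · rw [if_neg he] at h1
          exact absurd rfl h1
      · obtain ⟨k, hk, hmem⟩ := toFinsupp_support_mem L p h
        exact ⟨k, hk, List.mem_cons_of_mem _ hmem⟩

end FaaAux

/-- The sum `ν_{d+1}` of the positive integer coefficients in the Faà di Bruno expansion
of the `(d+1)`-st derivative of `f(ω(t))`, for `f : ℝⁿ → ℝ`, is at most
`(n+1)^{d+1} (d+1)^{(d+1)(n+2)}`. -/
theorem faa_di_bruno_coefficient_sum_bound
    (n d : ℕ) (f : EuclideanSpace ℝ (Fin n) → ℝ) (ω : ℝ → EuclideanSpace ℝ (Fin n))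
    (hf : ContDiff ℝ (⊤ : ℕ∞) f) (hω : ContDiff ℝ (⊤ : ℕ∞) ω) :
    ∃ (S : Finset ((Fin n → ℕ) × (Fin n → ℕ → ℕ)))
      (c : (Fin n → ℕ) × (Fin n → ℕ → ℕ) → ℕ),
      (∀ p ∈ S, 0 < c p) ∧
      (∀ p ∈ S,
        1 ≤ ∑ i, p.1 i ∧ (∑ i, p.1 i) ≤ d + 1 ∧
        (∀ i, ∑ j ∈ Finset.Icc 1 (d + 1), p.2 i j = p.1 i) ∧
        (∑ i, ∑ j ∈ Finset.Icc 1 (d + 1), j * p.2 i j = d + 1)) ∧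
      (∀ t : ℝ,
        iteratedDeriv (d + 1) (fun u => f (ω u)) t =
          ∑ p ∈ S, (c p : ℝ) * pderivMulti n p.1 f (ω t) *
            ∏ i, ∏ j ∈ Finset.Icc 1 (d + 1),
              (iteratedDeriv j (fun u => ω u i) t) ^ (p.2 i j)) ∧
      (∑ p ∈ S, c p) ≤ (n + 1) ^ (d + 1) * (d + 1) ^ ((d + 1) * (n + 2)) := by
  classical
  have hf' : ContDiff ℝ (↑(⊤:ℕ∞)) f := hf.of_le (by simp)
  have hω' : ContDiff ℝ (↑(⊤:ℕ∞)) ω := hω.of_le (by simp)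
  obtain ⟨L, hGood, hId, hBound⟩ := FaaAux.expansion hf' hω' (d+1)
  set μ := FaaAux.toFinsupp L with hμ
  refine ⟨μ.support, fun p => μ p, ?_, ?_, ?_, ?_⟩
  · intro p hp
    exact Nat.pos_of_ne_zero (Finsupp.mem_support_iff.mp hp)
  · intro p hp
    obtain ⟨k, hk, hmem⟩ := FaaAux.toFinsupp_support_mem L p hp
    have hg := hGood (p, k) hmem hk
    have h1le : 1 ≤ ∑ i, p.1 i := by
      by_contra hlt
      have hz : ∑ i, p.1 i = 0 := by omega
      have hall : ∀ i ∈ Finset.univ, p.1 i = 0 := Finset.sum_eq_zero_iff.mp hz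
      have hwz : ∑ i, ∑ j ∈ Finset.Icc 1 (d+1), j * p.2 i j = 0 := by
        apply Finset.sum_eq_zero
        intro i _
        apply Finset.sum_eq_zero
        intro j hj
        have hr := hg.2.2.1 i
        rw [hall i (Finset.mem_univ i)] at hr
        have : p.2 i j = 0 := (Finset.sum_eq_zero_iff.mp hr) j hj
        rw [this, Nat.mul_zero]
      rw [hg.2.2.2] at hwz
      omega
    exact ⟨h1le, hg.1, hg.2.2.1, hg.2.2.2⟩
  · intro t
    rw [hId t, ← FaaAux.toFinsupp_sum_real (fun p => FaaAux.Tterm f ω (d+1) p t) L,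
      Finsupp.sum]
    refine Finset.sum_congr rfl fun p _ => ?_
    rw [FaaAux.Tterm, ← mul_assoc]
  · have hb : (∑ p ∈ μ.support, μ p) = (L.map Prod.snd).sum :=
      FaaAux.toFinsupp_sum_nat L
    rw [hb]
    refine le_trans hBound ?_
    rw [mul_pow]
    refine Nat.mul_le_mul_left _ (Nat.pow_le_pow_right (by omega) ?_)
    nlinarith
end

section
/- Let f : B^n → ℝ be C^{d+1}, let ω(t) = (ω_1(t),...,ω_n(t)) be a polynomial curve with each ω_i of degree at most s and ω([-1,1]) ⊂ B^n, and let g(t) = f(ω(t)). Then in the Faà di Bruno expansion of g^{(d+1)}(t), all terms with |α| ≤ ⌊(d+1)/(s+1)⌋ vanish identically; that is, g^{(d+1)}(t) = Σ_{|α| = η}^{d+1} f^{(α)}(ω(t)) Σ_{β} c_{α,β}(Dω_α)^β, where η = ⌊(d+1)/(s+1)⌋ + 1. -/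
/-!
Differentiating a monomial `∂^α f(ω t) · ∏_{(i, j) ∈ M} ω_i^{(j)}(t)` gives, by the chain rule,
the monomials with one extra factor `ω_i'` (and `α` raised at `i`), and, by the product rule,
the monomials in which one order `j` is raised by one. Starting from `f(ω t)`, `(f ∘ ω)^{(k)}`
is therefore a sum of such monomials with `∑ j = k` and every `j ≥ 1`, where `|α|` is the number
of factors; symmetry of second derivatives identifies the iterated partials with `∂^α f`.
If `ω` is polynomial of degree `≤ s`, a monomial containing a factor with `j > s` vanishes, and
each remaining one satisfies `k = ∑ j ≤ s |α| < (s + 1) |α|`, i.e. `|α| > k / (s + 1)`.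
-/

theorem iteratedDeriv_polynomial_eval {𝕜 : Type*} [NontriviallyNormedField 𝕜] (P : Polynomial 𝕜)
    (j : ℕ) :
    iteratedDeriv j (fun u => P.eval u) = fun u => (Polynomial.derivative^[j] P).eval u := by
  induction j generalizing P with
  | zero => simp
  | succ j ih =>
    rw [iteratedDeriv_succ', Function.iterate_succ_apply, ← ih]
    congr
    funext u
    exact P.deriv

theorem hasDerivAt_multiset_sum_map {𝕜 F ι : Type*} [NontriviallyNormedField 𝕜]
    [NormedAddCommGroup F] [NormedSpace 𝕜 F] {M : Multiset ι} {g : ι → 𝕜 → F} {g' : ι → F}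
    {t : 𝕜} (hg : ∀ x ∈ M, HasDerivAt (g x) (g' x) t) :
    HasDerivAt (fun u => (M.map (g · u)).sum) (M.map g').sum t := by
  induction M using Multiset.induction_on with
  | empty => simpa using hasDerivAt_const t (0 : F)
  | cons a M ih =>
    simpa using (hg a (Multiset.mem_cons_self a M)).fun_add
      (ih fun x hx => hg x (Multiset.mem_cons_of_mem hx))

theorem hasDerivAt_multiset_prod_map {𝕜 𝔸 ι : Type*} [NontriviallyNormedField 𝕜]
    [NormedCommRing 𝔸] [NormedAlgebra 𝕜 𝔸] [DecidableEq ι] {M : Multiset ι} {w : ι → 𝕜 → 𝔸}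
    {w' : ι → 𝔸} {t : 𝕜} (hw : ∀ x ∈ M, HasDerivAt (w x) (w' x) t) :
    HasDerivAt (fun u => (M.map (w · u)).prod)
      (M.map fun x => ((M.erase x).map (w · t)).prod * w' x).sum t := by
  rw [hasDerivAt_iff_hasFDerivAt]
  refine (HasFDerivAt.multiset_prod fun x hx => (hw x hx).hasFDerivAt).congr_fderiv ?_
  ext
  rw [← ContinuousLinearMap.apply_apply (v := (1 : 𝕜)), map_multiset_sum, Multiset.map_map]
  simp [Function.comp_def]

@[to_additive]
theorem Finset.prod_multiset_map_count_of_subset {ι M : Type*} [DecidableEq ι] [CommMonoid M]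
    {m : Multiset ι} {s : Finset ι} (hms : ∀ a ∈ m, a ∈ s) (f : ι → M) :
    (m.map f).prod = ∏ a ∈ s, f a ^ m.count a := by
  rw [Finset.prod_multiset_map_count]
  refine Finset.prod_subset (fun a ha => hms a (Multiset.mem_toFinset.mp ha)) fun a _ ha => ?_
  rw [Multiset.count_eq_zero.mpr (by simpa using ha), pow_zero]

namespace Multiset

theorem sum_count_eq_count_map_fst {α β : Type*} [DecidableEq α] [DecidableEq β]
    {M : Multiset (α × β)} {T : Finset β} (hM : ∀ x ∈ M, x.2 ∈ T) (a : α) :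
    ∑ b ∈ T, M.count (a, b) = (M.map Prod.fst).count a := by
  induction M using Multiset.induction_on with
  | empty => simp
  | cons x M ih =>
    have hx := hM x (mem_cons_self x M)
    simp only [count_cons, map_cons, Finset.sum_add_distrib,
      ih fun y hy => hM y (mem_cons_of_mem hy)]
    by_cases h : a = x.1 <;> simp [Prod.ext_iff, h, hx]

theorem sum_sum_mul_count_eq_sum_map_snd {α : Type*} [Fintype α] [DecidableEq α]
    {M : Multiset (α × ℕ)} {T : Finset ℕ} (hM : ∀ x ∈ M, x.2 ∈ T) :
    ∑ a, ∑ j ∈ T, j * M.count (a, j) = (M.map Prod.snd).sum := by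
  rw [Finset.sum_multiset_map_count_of_subset (s := Finset.univ ×ˢ T) (by simpa using hM),
    Finset.sum_product]
  simp [mul_comm]

theorem sum_div_succ_lt_card {m : Multiset ℕ} {s : ℕ} (hm : 0 < m.sum) (hs : ∀ x ∈ m, x ≤ s) :
    m.sum / (s + 1) < card m := by
  have hle : m.sum ≤ card m * s := by simpa using sum_le_card_nsmul m s hs
  have hcard : card m ≠ 0 := fun h => by simp [card_eq_zero.mp h] at hm
  rw [Nat.div_lt_iff_lt_mul s.succ_pos, Nat.succ_eq_add_one, mul_add, mul_one]
  omega

end Multiset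

section PartialDerivatives

variable {n : ℕ}

theorem contDiff_pderivE {i : Fin n} {f : EuclideanSpace ℝ (Fin n) → ℝ} {m : ℕ}
    (hf : ContDiff ℝ (m + 1 : ℕ) f) : ContDiff ℝ m (pderivE n i f) :=
  (hf.fderiv_right (by simp)).clm_apply contDiff_const

theorem pderivE_comm {i j : Fin n} {f : EuclideanSpace ℝ (Fin n) → ℝ} (hf : ContDiff ℝ 2 f) :
    pderivE n i (pderivE n j f) = pderivE n j (pderivE n i f) := by
  have hdf : Differentiable ℝ (fderiv ℝ f) :=
    (hf.fderiv_right (m := 1) (by norm_num)).differentiable (by norm_num)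
  have hsecond : ∀ x a b, pderivE n a (pderivE n b f) x =
      fderiv ℝ (fderiv ℝ f) x (EuclideanSpace.single a 1) (EuclideanSpace.single b 1) := by
    intro x a b
    change fderiv ℝ (fun y => fderiv ℝ f y (EuclideanSpace.single b 1)) x _ = _
    rw [fderiv_clm_apply (hdf x) (differentiableAt_const _)]
    simp
  funext x
  rw [hsecond, hsecond]
  exact hf.contDiffAt.isSymmSndFDerivAt (by simp) _ _

theorem hasDerivAt_comp_curve {G : EuclideanSpace ℝ (Fin n) → ℝ}
    {ω : ℝ → EuclideanSpace ℝ (Fin n)} {t : ℝ} (hG : DifferentiableAt ℝ G (ω t))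
    (hω : DifferentiableAt ℝ ω t) :
    HasDerivAt (fun u => G (ω u)) (∑ i, pderivE n i G (ω t) * deriv (fun u => ω u i) t) t := by
  have hcoord : ∀ i, deriv (fun u => ω u i) t = deriv ω t i := fun i =>
    ((EuclideanSpace.proj i : EuclideanSpace ℝ (Fin n) →L[ℝ] ℝ).hasFDerivAt.comp_hasDerivAt t
      hω.hasDerivAt).deriv
  have hexpand : fderiv ℝ G (ω t) (deriv ω t) =
      ∑ i, pderivE n i G (ω t) * deriv (fun u => ω u i) t := by
    conv_lhs => rw [← (EuclideanSpace.basisFun (Fin n) ℝ).sum_repr (deriv ω t)]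
    simp [pderivE, hcoord, mul_comm]
  rw [← hexpand]
  exact hG.hasFDerivAt.comp_hasDerivAt t hω.hasDerivAt

noncomputable def pderivList (n : ℕ) (L : List (Fin n)) (f : EuclideanSpace ℝ (Fin n) → ℝ) :
    EuclideanSpace ℝ (Fin n) → ℝ :=
  L.foldr (pderivE n) f

theorem contDiff_pderivList (L : List (Fin n)) {f : EuclideanSpace ℝ (Fin n) → ℝ} {m : ℕ}
    (hf : ContDiff ℝ (m + L.length : ℕ) f) : ContDiff ℝ m (pderivList n L f) := by
  induction L generalizing m with
  | nil => simpa [pderivList] using hf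
  | cons i L ih =>
    refine contDiff_pderivE (ih ?_)
    rwa [List.length_cons, ← add_assoc, Nat.add_right_comm] at hf

theorem pderivList_eq_of_perm {L L' : List (Fin n)} (hL : L.Perm L')
    {f : EuclideanSpace ℝ (Fin n) → ℝ} (hf : ContDiff ℝ L.length f) :
    pderivList n L f = pderivList n L' f := by
  induction hL with
  | nil => rfl
  | cons i _ ih => exact congrArg (pderivE n i) (ih (hf.of_le (by simp)))
  | swap i j L =>
    refine pderivE_comm (contDiff_pderivList L ?_)
    rwa [List.length_cons, List.length_cons, add_assoc, add_comm] at hf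
  | trans h₁₂ _ ih₁₂ ih₂₃ => rw [ih₁₂ hf, ih₂₃ (by rwa [← h₁₂.length_eq])]

theorem pderivList_replicate (k : ℕ) (i : Fin n) (f : EuclideanSpace ℝ (Fin n) → ℝ) :
    pderivList n (List.replicate k i) f = (pderivE n i)^[k] f := by
  induction k with
  | zero => rfl
  | succ k ih => rw [Function.iterate_succ_apply', ← ih]; rfl

theorem pderivMulti_eq_pderivList (α : Fin n → ℕ) (f : EuclideanSpace ℝ (Fin n) → ℝ) :
    pderivMulti n α f =
      pderivList n ((List.finRange n).flatMap fun i => List.replicate (α i) i) f := by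
  simp only [pderivMulti, pderivList, List.foldr_flatMap]
  congr
  funext i g
  exact (pderivList_replicate _ _ _).symm

theorem pderivMulti_zero (f : EuclideanSpace ℝ (Fin n) → ℝ) : pderivMulti n 0 f = f := by
  have hnil : (List.finRange n).flatMap (fun i => List.replicate ((0 : Fin n → ℕ) i) i) = [] := by
    simp [List.flatMap_eq_nil_iff]
  rw [pderivMulti_eq_pderivList, hnil]
  rfl

theorem pderivMulti_count_eq_pderivList (L : List (Fin n)) {f : EuclideanSpace ℝ (Fin n) → ℝ}
    (hf : ContDiff ℝ L.length f) : pderivMulti n (fun i => L.count i) f = pderivList n L f := by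
  have hperm : L.Perm ((List.finRange n).flatMap fun i => List.replicate (L.count i) i) := by
    refine List.perm_iff_count.mpr fun i => ?_
    rw [List.count_flatMap, ← Fin.sum_univ_def]
    simp [List.count_replicate]
  rw [pderivMulti_eq_pderivList, pderivList_eq_of_perm hperm hf]

theorem contDiff_pderivMulti_count (N : Multiset (Fin n)) {f : EuclideanSpace ℝ (Fin n) → ℝ}
    {m : ℕ} (hf : ContDiff ℝ (m + N.card : ℕ) f) :
    ContDiff ℝ m (pderivMulti n (fun i => N.count i) f) := by
  obtain ⟨L, rfl⟩ : ∃ L : List (Fin n), (L : Multiset (Fin n)) = N := Quotient.exists_rep N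
  simp only [Multiset.coe_count, Multiset.coe_card] at hf ⊢
  rw [pderivMulti_count_eq_pderivList L (hf.of_le (by simp))]
  exact contDiff_pderivList L hf

theorem pderivE_pderivMulti_count (i : Fin n) (N : Multiset (Fin n))
    {f : EuclideanSpace ℝ (Fin n) → ℝ} (hf : ContDiff ℝ (N.card + 1 : ℕ) f) :
    pderivE n i (pderivMulti n (fun j => N.count j) f) =
      pderivMulti n (fun j => (i ::ₘ N).count j) f := by
  obtain ⟨L, rfl⟩ : ∃ L : List (Fin n), (L : Multiset (Fin n)) = N := Quotient.exists_rep N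
  simp only [Multiset.coe_count, Multiset.coe_card, Multiset.cons_coe] at hf ⊢
  rw [pderivMulti_count_eq_pderivList L (hf.of_le (by simp)),
    pderivMulti_count_eq_pderivList (i :: L) (by simpa using hf)]
  rfl

end PartialDerivatives

section FaaDiBruno

variable {n : ℕ}

noncomputable def faaDiBrunoTerm (f : EuclideanSpace ℝ (Fin n) → ℝ)
    (ω : ℝ → EuclideanSpace ℝ (Fin n)) (M : Multiset (Fin n × ℕ)) (t : ℝ) : ℝ :=
  pderivMulti n (fun i => (M.map Prod.fst).count i) f (ω t) *
    (M.map fun x => iteratedDeriv x.2 (fun u => ω u x.1) t).prod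

def faaDiBrunoStep (M : Multiset (Fin n × ℕ)) : Multiset (Multiset (Fin n × ℕ)) :=
  (Finset.univ.val.map fun i => (i, 1) ::ₘ M) + M.map fun x => (x.1, x.2 + 1) ::ₘ M.erase x

def faaDiBrunoTerms (n : ℕ) : ℕ → Multiset (Multiset (Fin n × ℕ))
  | 0 => {0}
  | k + 1 => (faaDiBrunoTerms n k).bind faaDiBrunoStep

theorem hasDerivAt_faaDiBrunoTerm {f : EuclideanSpace ℝ (Fin n) → ℝ}
    {ω : ℝ → EuclideanSpace ℝ (Fin n)} {M : Multiset (Fin n × ℕ)} {t : ℝ}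
    (hf : ContDiff ℝ (M.card + 1 : ℕ) f) (hω : DifferentiableAt ℝ ω t)
    (hωM : ∀ x ∈ M, DifferentiableAt ℝ (iteratedDeriv x.2 (fun u => ω u x.1)) t) :
    HasDerivAt (faaDiBrunoTerm f ω M)
      ((faaDiBrunoStep M).map (faaDiBrunoTerm f ω · t)).sum t := by
  set N := M.map Prod.fst
  set G := pderivMulti n (fun i => N.count i) f
  set w : Fin n × ℕ → ℝ → ℝ := fun x u => iteratedDeriv x.2 (fun u => ω u x.1) u
  have hG : ContDiff ℝ 1 G := contDiff_pderivMulti_count N (by simpa [N, add_comm] using hf)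
  have hchain := hasDerivAt_comp_curve (hG.differentiable one_ne_zero (ω t)) hω
  have hprod := hasDerivAt_multiset_prod_map (M := M) (w := w)
    (w' := fun x => iteratedDeriv (x.2 + 1) (fun u => ω u x.1) t) fun x hx => by
      rw [iteratedDeriv_succ]
      exact (hωM x hx).hasDerivAt
  refine (hchain.mul hprod).congr_deriv ?_
  have hchainPart : ∀ i, faaDiBrunoTerm f ω ((i, 1) ::ₘ M) t =
      pderivE n i G (ω t) * deriv (fun u => ω u i) t * (M.map (w · t)).prod := by
    intro i
    rw [faaDiBrunoTerm, Multiset.map_cons, ← pderivE_pderivMulti_count i N (by simpa [N] using hf)]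
    simp [w, G, mul_assoc]
  have hprodPart : ∀ x ∈ M, faaDiBrunoTerm f ω ((x.1, x.2 + 1) ::ₘ M.erase x) t =
      G (ω t) * (((M.erase x).map (w · t)).prod *
        iteratedDeriv (x.2 + 1) (fun u => ω u x.1) t) := by
    intro x hx
    rw [faaDiBrunoTerm, Multiset.map_cons, Multiset.map_erase_of_mem _ _ hx]
    dsimp only
    rw [Multiset.cons_erase (Multiset.mem_map_of_mem _ hx)]
    simp [w, G, N, mul_comm]
  rw [faaDiBrunoStep, Multiset.map_add, Multiset.sum_add, Multiset.map_map, Multiset.map_map]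
  congr 1
  · rw [Finset.sum_mul]
    exact Finset.sum_congr rfl fun i _ => (hchainPart i).symm
  · rw [← Multiset.sum_map_mul_left]
    exact congrArg Multiset.sum (Multiset.map_congr rfl fun x hx => (hprodPart x hx).symm)

theorem faaDiBrunoTerms_weight {k : ℕ} {M : Multiset (Fin n × ℕ)}
    (hM : M ∈ faaDiBrunoTerms n k) : (M.map Prod.snd).sum = k ∧ ∀ x ∈ M, 1 ≤ x.2 := by
  induction k generalizing M with
  | zero =>
    obtain rfl : M = 0 := by simpa [faaDiBrunoTerms] using hM
    simp
  | succ k ih =>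
    obtain ⟨M₀, hM₀, hM⟩ := Multiset.mem_bind.mp hM
    obtain ⟨hsum, hpos⟩ := ih hM₀
    rcases Multiset.mem_add.mp hM with hchain | hprod
    · obtain ⟨i, -, rfl⟩ := Multiset.mem_map.mp hchain
      exact ⟨by simp [hsum, add_comm], by simpa using hpos⟩
    · obtain ⟨x, hx, rfl⟩ := Multiset.mem_map.mp hprod
      refine ⟨?_, by simpa using fun y hy => hpos y (Multiset.mem_of_mem_erase hy)⟩
      rw [← Multiset.sum_map_erase hx] at hsum
      simp only [Multiset.map_cons, Multiset.sum_cons]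
      omega

theorem card_le_of_mem_faaDiBrunoTerms {k : ℕ} {M : Multiset (Fin n × ℕ)}
    (hM : M ∈ faaDiBrunoTerms n k) : M.card ≤ k := by
  obtain ⟨hsum, hpos⟩ := faaDiBrunoTerms_weight hM
  simpa [hsum] using Multiset.card_nsmul_le_sum (s := M.map Prod.snd) (a := 1)
    (Multiset.forall_mem_map_iff.mpr hpos)

theorem mem_Icc_of_mem_faaDiBrunoTerms {k : ℕ} {M : Multiset (Fin n × ℕ)}
    (hM : M ∈ faaDiBrunoTerms n k) : ∀ x ∈ M, x.2 ∈ Finset.Icc 1 k := fun x hx =>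
  Finset.mem_Icc.mpr ⟨(faaDiBrunoTerms_weight hM).2 x hx,
    (faaDiBrunoTerms_weight hM).1 ▸ Multiset.le_sum_of_mem (Multiset.mem_map_of_mem _ hx)⟩

theorem iteratedDeriv_comp_eq_sum_faaDiBrunoTerm {f : EuclideanSpace ℝ (Fin n) → ℝ}
    {ω : ℝ → EuclideanSpace ℝ (Fin n)} {k : ℕ} (hf : ContDiff ℝ k f) (hω : ContDiff ℝ k ω) :
    iteratedDeriv k (fun u => f (ω u)) =
      fun t => ((faaDiBrunoTerms n k).map (faaDiBrunoTerm f ω · t)).sum := by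
  induction k with
  | zero =>
    funext t
    simp [faaDiBrunoTerms, faaDiBrunoTerm, ← Pi.zero_def, pderivMulti_zero]
  | succ k ih =>
    funext t
    rw [iteratedDeriv_succ, ih (hf.of_le (by simp)) (hω.of_le (by simp))]
    refine HasDerivAt.deriv ?_
    rw [faaDiBrunoTerms, Multiset.map_bind, Multiset.sum_bind]
    refine hasDerivAt_multiset_sum_map fun M hM => hasDerivAt_faaDiBrunoTerm ?_ ?_ fun x hx => ?_
    · exact hf.of_le (by exact_mod_cast Nat.succ_le_succ (card_le_of_mem_faaDiBrunoTerms hM))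
    · exact hω.differentiable (by simp) t
    · refine ((contDiff_euclidean.mp hω x.1).differentiable_iteratedDeriv x.2 ?_) t
      exact_mod_cast Nat.lt_succ_of_le
        (Finset.mem_Icc.mp (mem_Icc_of_mem_faaDiBrunoTerms hM x hx)).2

end FaaDiBruno

section PolynomialCurve

variable {n s : ℕ} {P : Fin n → Polynomial ℝ} {ω : ℝ → EuclideanSpace ℝ (Fin n)}

theorem contDiff_polynomial_curve (hω : ∀ t i, ω t i = (P i).eval t) (k : WithTop ℕ∞) :
    ContDiff ℝ k ω :=
  contDiff_euclidean.mpr fun i => by simpa [hω] using (P i).contDiff_aeval (𝕜 := ℝ) k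

theorem faaDiBrunoTerm_eq_zero_of_natDegree_lt (hω : ∀ t i, ω t i = (P i).eval t)
    {M : Multiset (Fin n × ℕ)} {x : Fin n × ℕ} (hx : x ∈ M) (hdeg : (P x.1).natDegree < x.2)
    (f : EuclideanSpace ℝ (Fin n) → ℝ) (t : ℝ) : faaDiBrunoTerm f ω M t = 0 := by
  have hcoord : (fun u => ω u x.1) = fun u => (P x.1).eval u := funext fun u => hω u x.1
  refine mul_eq_zero_of_right _ (Multiset.prod_eq_zero (Multiset.mem_map.mpr ⟨x, hx, ?_⟩))
  simp [hcoord, iteratedDeriv_polynomial_eval, Polynomial.iterate_derivative_eq_zero hdeg]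

theorem iteratedDeriv_comp_polynomial_curve {f : EuclideanSpace ℝ (Fin n) → ℝ} {k : ℕ}
    (hf : ContDiff ℝ k f) (hω : ∀ t i, ω t i = (P i).eval t) (hdeg : ∀ i, (P i).natDegree ≤ s)
    (t : ℝ) : iteratedDeriv k (fun u => f (ω u)) t =
      (((faaDiBrunoTerms n k).filter fun M => ∀ x ∈ M, x.2 ≤ s).map
        (faaDiBrunoTerm f ω · t)).sum := by
  rw [iteratedDeriv_comp_eq_sum_faaDiBrunoTerm hf (contDiff_polynomial_curve hω k)]
  dsimp only
  conv_lhs => rw [← Multiset.filter_add_not (fun M => ∀ x ∈ M, x.2 ≤ s) (faaDiBrunoTerms n k)]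
  rw [Multiset.map_add, Multiset.sum_add, add_eq_left]
  refine Multiset.sum_eq_zero fun y hy => ?_
  obtain ⟨M, hM, rfl⟩ := Multiset.mem_map.mp hy
  obtain ⟨x, hx, hsx⟩ := not_forall₂.mp (Multiset.mem_filter.mp hM).2
  exact faaDiBrunoTerm_eq_zero_of_natDegree_lt hω hx ((hdeg x.1).trans_lt (not_le.mp hsx)) f t

end PolynomialCurve

section Regrouping

variable {n K : ℕ} {M : Multiset (Fin n × ℕ)}

def faaDiBrunoIndex (M : Multiset (Fin n × ℕ)) : (Fin n → ℕ) × (Fin n → ℕ → ℕ) :=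
  (fun i => (M.map Prod.fst).count i, fun i j => M.count (i, j))

theorem sum_faaDiBrunoIndex_fst : ∑ i, (faaDiBrunoIndex M).1 i = M.card := by
  simp [faaDiBrunoIndex]

theorem faaDiBrunoTerm_eq (hM : ∀ x ∈ M, x.2 ∈ Finset.Icc 1 K)
    (f : EuclideanSpace ℝ (Fin n) → ℝ) (ω : ℝ → EuclideanSpace ℝ (Fin n)) (t : ℝ) :
    faaDiBrunoTerm f ω M t = pderivMulti n (faaDiBrunoIndex M).1 f (ω t) *
      ∏ i, ∏ j ∈ Finset.Icc 1 K,
        iteratedDeriv j (fun u => ω u i) t ^ (faaDiBrunoIndex M).2 i j := by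
  rw [faaDiBrunoTerm, Finset.prod_multiset_map_count_of_subset (s := Finset.univ ×ˢ Finset.Icc 1 K)
    (by simpa using hM), Finset.prod_product]
  rfl

end Regrouping

theorem chain_rule_low_order_terms_vanish_general
    (n d s : ℕ) (f : EuclideanSpace ℝ (Fin n) → ℝ) (hf : ContDiff ℝ (d + 1) f)
    (P : Fin n → Polynomial ℝ) (hdeg : ∀ i, (P i).natDegree ≤ s)
    (ω : ℝ → EuclideanSpace ℝ (Fin n)) (hωdef : ∀ t i, ω t i = (P i).eval t) :
    ∃ (S : Finset ((Fin n → ℕ) × (Fin n → ℕ → ℕ)))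
      (c : (Fin n → ℕ) × (Fin n → ℕ → ℕ) → ℤ),
      (∀ p ∈ S,
        (d + 1) / (s + 1) + 1 ≤ ∑ i, p.1 i ∧ (∑ i, p.1 i) ≤ d + 1 ∧
        (∀ i, ∑ j ∈ Finset.Icc 1 (d + 1), p.2 i j = p.1 i) ∧
        (∑ i, ∑ j ∈ Finset.Icc 1 (d + 1), j * p.2 i j = d + 1)) ∧
      ∀ t : ℝ,
        iteratedDeriv (d + 1) (fun u => f (ω u)) t =
          ∑ p ∈ S, (c p : ℝ) * pderivMulti n p.1 f (ω t) *
            ∏ i, ∏ j ∈ Finset.Icc 1 (d + 1),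
              (iteratedDeriv j (fun u => ω u i) t) ^ (p.2 i j) := by
  classical
  set G := (faaDiBrunoTerms n (d + 1)).filter fun M => ∀ x ∈ M, x.2 ≤ s
  refine ⟨(G.map faaDiBrunoIndex).toFinset, fun p => (G.map faaDiBrunoIndex).count p,
    fun p hp => ?_, fun t => ?_⟩
  · obtain ⟨M, hMG, rfl⟩ := Multiset.mem_map.mp (Multiset.mem_toFinset.mp hp)
    obtain ⟨hM, hs⟩ := Multiset.mem_filter.mp hMG
    have hIcc := mem_Icc_of_mem_faaDiBrunoTerms hM
    have hweight := (faaDiBrunoTerms_weight hM).1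
    rw [sum_faaDiBrunoIndex_fst]
    refine ⟨?_, card_le_of_mem_faaDiBrunoTerms hM, Multiset.sum_count_eq_count_map_fst hIcc,
      (Multiset.sum_sum_mul_count_eq_sum_map_snd hIcc).trans hweight⟩
    simpa [hweight] using Multiset.sum_div_succ_lt_card (m := M.map Prod.snd) (by omega)
      (Multiset.forall_mem_map_iff.mpr hs)
  · set T : (Fin n → ℕ) × (Fin n → ℕ → ℕ) → ℝ := fun p => pderivMulti n p.1 f (ω t) *
      ∏ i, ∏ j ∈ Finset.Icc 1 (d + 1), iteratedDeriv j (fun u => ω u i) t ^ p.2 i j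
    calc iteratedDeriv (d + 1) (fun u => f (ω u)) t = ((G.map faaDiBrunoIndex).map T).sum := by
          rw [iteratedDeriv_comp_polynomial_curve (by exact_mod_cast hf) hωdef hdeg,
            Multiset.map_map]
          refine congrArg Multiset.sum (Multiset.map_congr rfl fun M hM => ?_)
          exact faaDiBrunoTerm_eq
            (mem_Icc_of_mem_faaDiBrunoTerms (Multiset.mem_filter.mp hM).1) f ω t
      _ = _ := by
          rw [Finset.sum_multiset_map_count]
          simp [T, mul_assoc]

/-- For a polynomial curve `ω` of degree ≤ `s` with `ω([-1,1]) ⊆ Bⁿ` and a `C^{d+1}`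
function `f`, in the Faà di Bruno expansion of `(f ∘ ω)^{(d+1)}` all terms with
`|α| ≤ ⌊(d+1)/(s+1)⌋` vanish: the expansion only involves multi-indices `α` with
`⌊(d+1)/(s+1)⌋ + 1 ≤ |α| ≤ d + 1`. -/
theorem chain_rule_low_order_terms_vanish
    (n d s : ℕ) (f : EuclideanSpace ℝ (Fin n) → ℝ) (hf : ContDiff ℝ (d + 1) f)
    (P : Fin n → Polynomial ℝ) (hdeg : ∀ i, (P i).natDegree ≤ s)
    (ω : ℝ → EuclideanSpace ℝ (Fin n)) (hωdef : ∀ t i, ω t i = (P i).eval t)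
    (hball : ∀ t ∈ Set.Icc (-1 : ℝ) 1,
      ω t ∈ Metric.closedBall (0 : EuclideanSpace ℝ (Fin n)) 1) :
    ∃ (S : Finset ((Fin n → ℕ) × (Fin n → ℕ → ℕ)))
      (c : (Fin n → ℕ) × (Fin n → ℕ → ℕ) → ℤ),
      (∀ p ∈ S,
        (d + 1) / (s + 1) + 1 ≤ ∑ i, p.1 i ∧ (∑ i, p.1 i) ≤ d + 1 ∧
        (∀ i, ∑ j ∈ Finset.Icc 1 (d + 1), p.2 i j = p.1 i) ∧
        (∑ i, ∑ j ∈ Finset.Icc 1 (d + 1), j * p.2 i j = d + 1)) ∧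
      ∀ t : ℝ,
        iteratedDeriv (d + 1) (fun u => f (ω u)) t =
          ∑ p ∈ S, (c p : ℝ) * pderivMulti n p.1 f (ω t) *
            ∏ i, ∏ j ∈ Finset.Icc 1 (d + 1),
              (iteratedDeriv j (fun u => ω u i) t) ^ (p.2 i j) :=
  chain_rule_low_order_terms_vanish_general n d s f hf P hdeg ω hωdef
end

section
/- Let g : [-1,1] → ℝ be C^{d+1} with at least d+1 distinct zeros in [-1,1] and max_{t ∈ [-1,1]} |g(t)| = m. Then there exists t_0 ∈ [-1,1] with |g^{(d+1)}(t_0)| ≥ m·(d+1)!/2^{d+1}. -/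
/-!
With `ω y = ∏_{x ∈ X} (y - x)` over `d + 1` zeros `X` of `g` and a point `t` where `|g t| = m`,
the function `g - (g t / ω t) • ω` vanishes at the `d + 2` points `insert t X`, so by iterated
Rolle its `(d+1)`-st derivative vanishes at some `ξ`. As `ω` is monic of degree `d + 1`, this
reads `g⁽ᵈ⁺¹⁾ ξ = (d+1)! g t / ω t`, and `|ω t| ≤ 2 ^ (d + 1)` on `[-1, 1]`.
-/

open Set Polynomial

theorem Polynomial.iteratedDeriv_eval {𝕜 : Type*} [NontriviallyNormedField 𝕜] (p : 𝕜[X])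
    (n : ℕ) :
    iteratedDeriv n (fun x => p.eval x) = fun x => (derivative^[n] p).eval x := by
  induction n generalizing p with
  | zero => rfl
  | succ n ih =>
    have hderiv : _root_.deriv (fun x => p.eval x) = fun x => p.derivative.eval x := by
      ext; exact p.deriv
    rw [iteratedDeriv_succ', hderiv, ih, Function.iterate_succ_apply]

theorem iteratedDeriv_card_prod_sub {𝕜 : Type*} [NontriviallyNormedField 𝕜]
    (X : Finset 𝕜) :
    iteratedDeriv X.card (fun t => ∏ x ∈ X, (t - x)) = fun _ => (X.card.factorial : 𝕜) := by
  have hprod : (fun t => ∏ x ∈ X, (t - x)) = fun t => (∏ x ∈ X, (Polynomial.X - C x)).eval t := by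
    simp [eval_prod]
  rw [hprod, Polynomial.iteratedDeriv_eval, iterate_derivative_prod_X_sub_C le_rfl]
  simp

theorem exists_finset_derivWithin_eq_zero {s : Set ℝ} (hs : s.OrdConnected) {f : ℝ → ℝ}
    (hf : ContinuousOn f s) (S : Finset ℝ) (hSs : ↑S ⊆ s) (hSf : ∀ t ∈ S, f t = 0) :
    ∃ T : Finset ℝ, ↑T ⊆ s ∧ S.card ≤ T.card + 1 ∧ ∀ t ∈ T, derivWithin f s t = 0 := by
  set Z := {t ∈ s | derivWithin f s t = 0}
  rcases Z.finite_or_infinite with hZ | hZ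
  · refine ⟨hZ.toFinset, fun t ht => (hZ.mem_toFinset.1 ht).1, ?_,
      fun t ht => (hZ.mem_toFinset.1 ht).2⟩
    refine Finset.card_le_of_interleaved fun x hx y hy hxy _ => ?_
    have hxys : Icc x y ⊆ s := hs.out (hSs hx) (hSs hy)
    obtain ⟨z, hz, hfz⟩ :=
      exists_deriv_eq_zero hxy (hf.mono hxys) ((hSf x hx).trans (hSf y hy).symm)
    refine ⟨z, hZ.mem_toFinset.2 ⟨hxys (Ioo_subset_Icc_self hz), ?_⟩, hz⟩
    rw [derivWithin_of_mem_nhds (Filter.mem_of_superset (Icc_mem_nhds hz.1 hz.2) hxys), hfz]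
  · obtain ⟨T, hTZ, hT⟩ := hZ.exists_subset_card_eq S.card
    exact ⟨T, fun t ht => (hTZ ht).1, by omega, fun t ht => (hTZ ht).2⟩

theorem exists_iteratedDerivWithin_eq_zero {s : Set ℝ} (hs : s.OrdConnected)
    (hs' : UniqueDiffOn ℝ s) {n : ℕ} {f : ℝ → ℝ} (hf : ContDiffOn ℝ n f s) (S : Finset ℝ)
    (hSs : ↑S ⊆ s) (hcard : n < S.card) (hSf : ∀ t ∈ S, f t = 0) :
    ∃ ξ ∈ s, iteratedDerivWithin n f s ξ = 0 := by
  induction n generalizing f S with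
  | zero =>
    obtain ⟨t, ht⟩ := Finset.card_pos.1 hcard
    exact ⟨t, hSs ht, by simpa using hSf t ht⟩
  | succ n ih =>
    obtain ⟨T, hTs, hST, hTf⟩ := exists_finset_derivWithin_eq_zero hs hf.continuousOn S hSs hSf
    simp only [iteratedDerivWithin_succ']
    exact ih (hf.derivWithin hs' (by norm_cast)) T hTs (by omega) hTf

theorem prod_sub_ne_zero {𝕜 : Type*} [Field 𝕜] {X : Finset 𝕜} {t : 𝕜} (htX : t ∉ X) :
    ∏ x ∈ X, (t - x) ≠ 0 :=
  Finset.prod_ne_zero_iff.2 fun _ hx => sub_ne_zero.2 (ne_of_mem_of_not_mem hx htX).symm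

theorem exists_iteratedDerivWithin_eq_mul_div_prod {s : Set ℝ} (hs : s.OrdConnected)
    (hs' : UniqueDiffOn ℝ s) {f : ℝ → ℝ} (X : Finset ℝ) (hf : ContDiffOn ℝ X.card f s)
    (hXs : ↑X ⊆ s) (hXf : ∀ x ∈ X, f x = 0) {t : ℝ} (ht : t ∈ s) (htX : t ∉ X) :
    ∃ ξ ∈ s, iteratedDerivWithin X.card f s ξ =
      X.card.factorial * f t / ∏ x ∈ X, (t - x) := by
  set ω : ℝ → ℝ := fun y => ∏ x ∈ X, (y - x)
  set c := f t / ω t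
  have hω : ContDiff ℝ X.card ω := contDiff_prod fun x _ => contDiff_id.sub contDiff_const
  have hcω : ContDiffOn ℝ X.card (c • ω) s := hω.contDiffOn.const_smul c
  have hzero : ∀ y ∈ insert t X, (f - c • ω) y = 0 := by
    intro y hy
    rcases Finset.mem_insert.1 hy with rfl | hy
    · simp [c, div_mul_cancel₀ _ (show ω y ≠ 0 from prod_sub_ne_zero htX)]
    · simp [hXf y hy, ω, Finset.prod_eq_zero hy (sub_self y)]
  obtain ⟨ξ, hξ, hξ0⟩ := exists_iteratedDerivWithin_eq_zero hs hs' (f := f - c • ω) (hf.sub hcω)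
    (insert t X) (by simpa using Set.insert_subset ht hXs)
    (by rw [Finset.card_insert_of_notMem htX]; omega) hzero
  refine ⟨ξ, hξ, ?_⟩
  rw [iteratedDerivWithin_sub hξ hs' (hf ξ hξ) (hcω ξ hξ),
    iteratedDerivWithin_const_smul_field,
    iteratedDerivWithin_eq_iteratedDeriv hs' hω.contDiffAt hξ, iteratedDeriv_card_prod_sub,
    sub_eq_zero] at hξ0
  rw [hξ0, smul_eq_mul, mul_div_assoc, mul_comm]

theorem abs_prod_sub_le_two_pow_card {X : Finset ℝ} (hX : ↑X ⊆ Icc (-1 : ℝ) 1) {t : ℝ}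
    (ht : t ∈ Icc (-1 : ℝ) 1) : |∏ x ∈ X, (t - x)| ≤ 2 ^ X.card :=
  calc |∏ x ∈ X, (t - x)| = ∏ x ∈ X, |t - x| := Finset.abs_prod _ _
    _ ≤ ∏ _x ∈ X, (2 : ℝ) := Finset.prod_le_prod (fun _ _ => abs_nonneg _) fun x hx =>
        abs_sub_le_iff.2 ⟨by linarith [(hX hx).1, ht.2], by linarith [(hX hx).2, ht.1]⟩
    _ = 2 ^ X.card := Finset.prod_const 2

theorem one_dim_rigidity_general
    (d : ℕ) (g : ℝ → ℝ) (m : ℝ)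
    (hg : ContDiffOn ℝ (d + 1) g (Set.Icc (-1 : ℝ) 1))
    (Z : Finset ℝ) (hZ : (Z : Set ℝ) ⊆ Set.Icc (-1 : ℝ) 1)
    (hZcard : d + 1 ≤ Z.card) (hZzero : ∀ t ∈ Z, g t = 0)
    (hattain : ∃ t ∈ Set.Icc (-1 : ℝ) 1, |g t| = m) :
    ∃ t₀ ∈ Set.Icc (-1 : ℝ) 1,
      m * (Nat.factorial (d + 1) : ℝ) / 2 ^ (d + 1) ≤
        |iteratedDerivWithin (d + 1) g (Set.Icc (-1 : ℝ) 1) t₀| := by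
  obtain ⟨t, ht, rfl⟩ := hattain
  by_cases htZ : t ∈ Z
  · exact ⟨t, ht, by simp [hZzero t htZ]⟩
  obtain ⟨X, hXZ, hXcard⟩ := Finset.exists_subset_card_eq hZcard
  have hX : ↑X ⊆ Icc (-1 : ℝ) 1 := (Finset.coe_subset.2 hXZ).trans hZ
  have htX : t ∉ X := fun h => htZ (hXZ h)
  obtain ⟨ξ, hξ, hgξ⟩ := exists_iteratedDerivWithin_eq_mul_div_prod ordConnected_Icc
    (uniqueDiffOn_Icc (by norm_num)) X (by rwa [hXcard]) hX (fun x hx => hZzero x (hXZ hx)) ht htX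
  have hprod := abs_prod_sub_le_two_pow_card hX ht
  rw [hXcard] at hgξ hprod
  refine ⟨ξ, hξ, ?_⟩
  rw [hgξ, abs_div, abs_mul, Nat.abs_cast, mul_comm]
  gcongr
  exact abs_pos.2 (prod_sub_ne_zero htX)

/-- One-dimensional rigidity lemma: if `g : [-1,1] → ℝ` is `C^{d+1}` with at least `d+1`
distinct zeros in `[-1,1]` and `max_{[-1,1]} |g| = m`, then some point `t₀ ∈ [-1,1]`
satisfies `|g^{(d+1)}(t₀)| ≥ m (d+1)! / 2^(d+1)`. -/
theorem one_dim_rigidity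
    (d : ℕ) (g : ℝ → ℝ) (m : ℝ)
    (hg : ContDiffOn ℝ (d + 1) g (Set.Icc (-1 : ℝ) 1))
    (Z : Finset ℝ) (hZ : (Z : Set ℝ) ⊆ Set.Icc (-1 : ℝ) 1)
    (hZcard : d + 1 ≤ Z.card) (hZzero : ∀ t ∈ Z, g t = 0)
    (hbound : ∀ t ∈ Set.Icc (-1 : ℝ) 1, |g t| ≤ m)
    (hattain : ∃ t ∈ Set.Icc (-1 : ℝ) 1, |g t| = m) :
    ∃ t₀ ∈ Set.Icc (-1 : ℝ) 1,
      m * (Nat.factorial (d + 1) : ℝ) / 2 ^ (d + 1) ≤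
        |iteratedDerivWithin (d + 1) g (Set.Icc (-1 : ℝ) 1) t₀| :=
  one_dim_rigidity_general d g m hg Z hZ hZcard hZzero hattain
end
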